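/- arXiv:1108.2249 — 10 statements merged into one kernel-verified Lean document; each statement's English description precedes it below -/
import Mathlib

section
/- Let 0 ≤ s < 1/2. There exists a constant C = C(s) > 0 such that for all square-summable sequences a, b : ℤ → ℂ one has Σ_{ξ∈ℤ, ξ≠0} ⟨ξ⟩² | Σ_{ξ₁∈ℤ, ξ₁≠0, ξ₁≠ξ} (⟨ξ₁⟩^s ⟨ξ−ξ₁⟩^s)/(⟨ξ⟩^s · ξ₁ · (ξ−ξ₁)) · a_{ξ₁} b_{ξ−ξ₁} |² ≤ C ‖a‖_{ℓ²}² ‖b‖_{ℓ²}². (This is the Fourier-coefficient form of Lemma 3.1: the bilinear normal-form operator T(u,v), defined by the symbol ⟨ξ₁⟩^s⟨ξ₂⟩^s/(⟨ξ₁+ξ₂⟩^s ξ₁ ξ₂) restricted to ξ₁ξ₂(ξ₁+ξ₂) ≠ 0, maps L²(𝕋) × L²(𝕋) boundedly into H¹(𝕋).) -/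
/-!
By Cauchy–Schwarz in `ξ₁`,
`‖∑ K(ξ, ξ₁) a ξ₁ b (ξ - ξ₁)‖² ≤ (∑ |K(ξ, ξ₁)|²) (∑ ‖a ξ₁‖² ‖b (ξ - ξ₁)‖²)`,
and the last factor sums over `ξ` to `‖a‖² ‖b‖²`. It therefore suffices to bound
`⟨ξ⟩² ∑_{ξ₁} |K(ξ, ξ₁)|²` uniformly in `ξ`. As `|n| ≥ ⟨n⟩ / 2` for `n ≠ 0`,
`|K(ξ, ξ₁)|² ≤ 16 ⟨ξ⟩^(-2s) ⟨ξ₁⟩^(-α) ⟨ξ - ξ₁⟩^(-α)` with `α = 2 - 2s > 1`; since the larger of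
`⟨ξ₁⟩`, `⟨ξ - ξ₁⟩` is at least `⟨ξ⟩ / 2`, the convolution `∑ ⟨ξ₁⟩^(-α) ⟨ξ - ξ₁⟩^(-α)` is
`O(⟨ξ⟩^(-α))`, and the powers of `⟨ξ⟩` cancel.
-/

open Real

theorem summable_mul_and_sq_tsum_mul_le {ι : Type*} {f g : ι → ℝ} (hf : ∀ i, 0 ≤ f i)
    (hg : ∀ i, 0 ≤ g i) (hf2 : Summable fun i => f i ^ 2) (hg2 : Summable fun i => g i ^ 2) :
    (Summable fun i => f i * g i) ∧
      (∑' i, f i * g i) ^ 2 ≤ (∑' i, f i ^ 2) * ∑' i, g i ^ 2 := by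
  have hf2' : Summable fun i => f i ^ (2 : ℝ) := by simpa only [rpow_two] using hf2
  have hg2' : Summable fun i => g i ^ (2 : ℝ) := by simpa only [rpow_two] using hg2
  obtain ⟨hsum, hle⟩ :=
    Real.summable_and_inner_le_Lp_mul_Lq_tsum_of_nonneg .two_two hf hg hf2' hg2'
  simp only [rpow_two, ← sqrt_eq_rpow] at hle
  refine ⟨hsum, ?_⟩
  calc (∑' i, f i * g i) ^ 2 ≤ (√(∑' i, f i ^ 2) * √(∑' i, g i ^ 2)) ^ 2 :=
        pow_le_pow_left₀ (tsum_nonneg fun i => mul_nonneg (hf i) (hg i)) hle 2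
    _ = _ := by
        rw [mul_pow, sq_sqrt (tsum_nonneg fun i => sq_nonneg _),
          sq_sqrt (tsum_nonneg fun i => sq_nonneg _)]

theorem summable_tsum_mul_sub_and_hasSum {G : Type*} [AddCommGroup G] {f g : G → ℝ}
    (hf0 : ∀ x, 0 ≤ f x) (hg0 : ∀ x, 0 ≤ g x) (hf : Summable f) (hg : Summable g) :
    (∀ ξ, Summable fun ξ₁ => f ξ₁ * g (ξ - ξ₁)) ∧
      HasSum (fun ξ => ∑' ξ₁, f ξ₁ * g (ξ - ξ₁)) ((∑' x, f x) * ∑' x, g x) := by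
  let e : G × G ≃ G × G :=
    (Equiv.prodComm G G).trans (Equiv.prodShear (Equiv.refl G) fun ξ₁ => Equiv.subRight ξ₁)
  have hprod : Summable fun p : G × G => f p.1 * g p.2 := hf.mul_of_nonneg hg hf0 hg0
  have hshear : Summable fun q : G × G => f (e q).1 * g (e q).2 :=
    e.summable_iff.mpr hprod
  have hfiber : ∀ ξ, Summable fun ξ₁ => f ξ₁ * g (ξ - ξ₁) := fun ξ => hshear.prod_factor ξ
  refine ⟨hfiber, ?_⟩
  convert hshear.hasSum.prod_fiberwise fun ξ => (hfiber ξ).hasSum using 1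
  rw [e.tsum_eq fun p : G × G => f p.1 * g p.2, hf.tsum_mul_tsum hg hprod]

theorem norm_tsum_mul_mul_sq_le {ι R : Type*} [SeminormedRing R] {k x y : ι → R}
    (hk : Summable fun i => ‖k i‖ ^ 2) (hxy : Summable fun i => ‖x i‖ ^ 2 * ‖y i‖ ^ 2) :
    ‖∑' i, k i * x i * y i‖ ^ 2 ≤ (∑' i, ‖k i‖ ^ 2) * ∑' i, ‖x i‖ ^ 2 * ‖y i‖ ^ 2 := by
  have hxy' : Summable fun i => (‖x i‖ * ‖y i‖) ^ 2 := by simpa only [mul_pow] using hxy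
  obtain ⟨hsum, hcs⟩ := summable_mul_and_sq_tsum_mul_le (fun i => norm_nonneg (k i))
    (fun i => mul_nonneg (norm_nonneg (x i)) (norm_nonneg (y i))) hk hxy'
  have hterm : ∀ i, ‖k i * x i * y i‖ ≤ ‖k i‖ * (‖x i‖ * ‖y i‖) := fun i =>
    (norm_mul_le _ _).trans (by
      rw [← mul_assoc]; gcongr; exact norm_mul_le _ _)
  have htri : ‖∑' i, k i * x i * y i‖ ≤ ∑' i, ‖k i‖ * (‖x i‖ * ‖y i‖) :=
    (norm_tsum_le_tsum_norm (hsum.of_nonneg_of_le (fun _ => norm_nonneg _) hterm)).trans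
      (Summable.tsum_le_tsum hterm
        (hsum.of_nonneg_of_le (fun _ => norm_nonneg _) hterm) hsum)
  calc ‖∑' i, k i * x i * y i‖ ^ 2 ≤ (∑' i, ‖k i‖ * (‖x i‖ * ‖y i‖)) ^ 2 :=
        pow_le_pow_left₀ (norm_nonneg _) htri 2
    _ ≤ _ := by simpa only [mul_pow] using hcs

theorem tsum_mul_norm_tsum_bilinear_sq_le {G R : Type*} [AddCommGroup G] [SeminormedRing R]
    {K : G → G → R} {w : G → ℝ} {M : ℝ} {a b : G → R} (hw : ∀ ξ, 0 ≤ w ξ)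
    (hK : ∀ ξ, Summable fun ξ₁ => ‖K ξ ξ₁‖ ^ 2) (hKM : ∀ ξ, w ξ * ∑' ξ₁, ‖K ξ ξ₁‖ ^ 2 ≤ M)
    (ha : Summable fun ξ => ‖a ξ‖ ^ 2) (hb : Summable fun ξ => ‖b ξ‖ ^ 2) :
    ∑' ξ, w ξ * ‖∑' ξ₁, K ξ ξ₁ * a ξ₁ * b (ξ - ξ₁)‖ ^ 2 ≤
      M * (∑' ξ, ‖a ξ‖ ^ 2) * ∑' ξ, ‖b ξ‖ ^ 2 := by
  obtain ⟨hfiber, hconv⟩ := summable_tsum_mul_sub_and_hasSum (fun _ => sq_nonneg _)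
    (fun _ => sq_nonneg _) ha hb
  have hpoint : ∀ ξ, w ξ * ‖∑' ξ₁, K ξ ξ₁ * a ξ₁ * b (ξ - ξ₁)‖ ^ 2 ≤
      M * ∑' ξ₁, ‖a ξ₁‖ ^ 2 * ‖b (ξ - ξ₁)‖ ^ 2 := fun ξ =>
    calc _ ≤ w ξ * ((∑' ξ₁, ‖K ξ ξ₁‖ ^ 2) * ∑' ξ₁, ‖a ξ₁‖ ^ 2 * ‖b (ξ - ξ₁)‖ ^ 2) := by
          gcongr
          · exact hw ξ
          · exact norm_tsum_mul_mul_sq_le (hK ξ) (hfiber ξ)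
      _ ≤ _ := by
          rw [← mul_assoc]
          exact mul_le_mul_of_nonneg_right (hKM ξ)
            (tsum_nonneg fun _ => mul_nonneg (sq_nonneg _) (sq_nonneg _))
  have hbound : HasSum (fun ξ => M * ∑' ξ₁, ‖a ξ₁‖ ^ 2 * ‖b (ξ - ξ₁)‖ ^ 2)
      (M * (∑' ξ, ‖a ξ‖ ^ 2) * ∑' ξ, ‖b ξ‖ ^ 2) := by
    rw [mul_assoc]; exact hconv.mul_left M
  have hsummable : Summable fun ξ => w ξ * ‖∑' ξ₁, K ξ ξ₁ * a ξ₁ * b (ξ - ξ₁)‖ ^ 2 :=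
    hbound.summable.of_nonneg_of_le (fun ξ => mul_nonneg (hw ξ) (sq_nonneg _)) hpoint
  exact hasSum_le hpoint hsummable.hasSum hbound

def bracket (n : ℤ) : ℝ := 1 + |(n : ℝ)|

theorem bracket_pos (n : ℤ) : 0 < bracket n := by unfold bracket; positivity

theorem bracket_le_two_mul_abs {n : ℤ} (hn : n ≠ 0) : bracket n ≤ 2 * |(n : ℝ)| := by
  have : (1 : ℝ) ≤ |(n : ℝ)| := by exact_mod_cast Int.one_le_abs hn
  unfold bracket; linarith

theorem bracket_le_add_sub (ξ ξ₁ : ℤ) : bracket ξ ≤ bracket ξ₁ + bracket (ξ - ξ₁) := by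
  have h := abs_add_le (ξ₁ : ℝ) (ξ - ξ₁)
  rw [add_sub_cancel] at h
  unfold bracket; push_cast; linarith

theorem summable_bracket_rpow_neg {α : ℝ} (hα : 1 < α) :
    Summable fun n : ℤ => bracket n ^ (-α) := by
  refine (summable_abs_int_rpow hα).of_norm_bounded_eventually ?_
  filter_upwards [(Set.finite_singleton (0 : ℤ)).compl_mem_cofinite] with n hn
  rw [norm_of_nonneg (rpow_nonneg (bracket_pos n).le _)]
  exact rpow_le_rpow_of_nonpos (abs_pos.mpr (by exact_mod_cast hn))
    (by unfold bracket; linarith) (by linarith)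

theorem rpow_neg_le_two_rpow_mul {t z α : ℝ} (hz : 0 < z) (hzt : z ≤ 2 * t) (hα : 0 ≤ α) :
    t ^ (-α) ≤ 2 ^ α * z ^ (-α) := by
  have ht : 0 < t := by linarith
  calc t ^ (-α) = 2 ^ α * (2 * t) ^ (-α) := by
        rw [mul_rpow zero_le_two ht.le, ← mul_assoc, rpow_neg zero_le_two,
          mul_inv_cancel₀ (rpow_pos_of_pos two_pos α).ne', one_mul]
    _ ≤ 2 ^ α * z ^ (-α) := mul_le_mul_of_nonneg_left
        (rpow_le_rpow_of_nonpos hz hzt (neg_nonpos.mpr hα)) (by positivity)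

theorem rpow_neg_mul_rpow_neg_le {x y z α : ℝ} (hx : 0 < x) (hy : 0 < y) (hz : 0 < z)
    (hzxy : z ≤ x + y) (hα : 0 ≤ α) :
    x ^ (-α) * y ^ (-α) ≤ 2 ^ α * z ^ (-α) * (x ^ (-α) + y ^ (-α)) := by
  have hx' := rpow_nonneg hx.le (-α)
  have hy' := rpow_nonneg hy.le (-α)
  rcases le_total y x with hyx | hxy
  · have := rpow_neg_le_two_rpow_mul hz (by linarith : z ≤ 2 * x) hα
    calc x ^ (-α) * y ^ (-α) ≤ 2 ^ α * z ^ (-α) * y ^ (-α) := by gcongr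
      _ ≤ _ := by gcongr; linarith
  · have := rpow_neg_le_two_rpow_mul hz (by linarith : z ≤ 2 * y) hα
    calc x ^ (-α) * y ^ (-α) ≤ x ^ (-α) * (2 ^ α * z ^ (-α)) := by gcongr
      _ = 2 ^ α * z ^ (-α) * x ^ (-α) := by ring
      _ ≤ _ := by gcongr; linarith

theorem bracket_rpow_neg_mul_le {α : ℝ} (hα : 0 ≤ α) (ξ ξ₁ : ℤ) :
    bracket ξ₁ ^ (-α) * bracket (ξ - ξ₁) ^ (-α) ≤
      2 ^ α * bracket ξ ^ (-α) * (bracket ξ₁ ^ (-α) + bracket (ξ - ξ₁) ^ (-α)) :=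
  rpow_neg_mul_rpow_neg_le (bracket_pos _) (bracket_pos _) (bracket_pos _)
    (bracket_le_add_sub ξ ξ₁) hα

theorem summable_bracket_rpow_neg_sub {α : ℝ} (hα : 1 < α) (ξ : ℤ) :
    Summable fun ξ₁ : ℤ => bracket (ξ - ξ₁) ^ (-α) :=
  (Equiv.subLeft ξ).summable_iff.mpr (summable_bracket_rpow_neg hα)

theorem summable_bracket_rpow_neg_mul_sub {α : ℝ} (hα : 1 < α) (ξ : ℤ) :
    Summable fun ξ₁ : ℤ => bracket ξ₁ ^ (-α) * bracket (ξ - ξ₁) ^ (-α) :=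
  have hdom := ((summable_bracket_rpow_neg hα).add (summable_bracket_rpow_neg_sub hα ξ)).mul_left
    (2 ^ α * bracket ξ ^ (-α))
  hdom.of_nonneg_of_le
    (fun _ => mul_nonneg (rpow_nonneg (bracket_pos _).le _) (rpow_nonneg (bracket_pos _).le _))
    (bracket_rpow_neg_mul_le (by linarith) ξ)

theorem tsum_bracket_rpow_neg_mul_sub_le {α : ℝ} (hα : 1 < α) (ξ : ℤ) :
    ∑' ξ₁ : ℤ, bracket ξ₁ ^ (-α) * bracket (ξ - ξ₁) ^ (-α) ≤
      2 ^ α * bracket ξ ^ (-α) * (2 * ∑' n : ℤ, bracket n ^ (-α)) := by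
  have hsum := summable_bracket_rpow_neg hα
  have hsub := summable_bracket_rpow_neg_sub hα ξ
  have hshift : ∑' ξ₁ : ℤ, bracket (ξ - ξ₁) ^ (-α) = ∑' n : ℤ, bracket n ^ (-α) :=
    (Equiv.subLeft ξ).tsum_eq fun n => bracket n ^ (-α)
  calc ∑' ξ₁ : ℤ, bracket ξ₁ ^ (-α) * bracket (ξ - ξ₁) ^ (-α)
      ≤ ∑' ξ₁ : ℤ, 2 ^ α * bracket ξ ^ (-α) * (bracket ξ₁ ^ (-α) + bracket (ξ - ξ₁) ^ (-α)) :=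
        Summable.tsum_le_tsum (bracket_rpow_neg_mul_le (by linarith) ξ)
          (summable_bracket_rpow_neg_mul_sub hα ξ) ((hsum.add hsub).mul_left _)
    _ = 2 ^ α * bracket ξ ^ (-α) * (2 * ∑' n : ℤ, bracket n ^ (-α)) := by
        rw [tsum_mul_left, hsum.tsum_add hsub, hshift, two_mul]

noncomputable def normalFormKernel (s : ℝ) (ξ ξ₁ : ℤ) : ℝ :=
  if ξ₁ ≠ 0 ∧ ξ₁ ≠ ξ then
    bracket ξ₁ ^ s * bracket (ξ - ξ₁) ^ s / (bracket ξ ^ s * ξ₁ * (ξ - ξ₁ : ℤ))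
  else 0

theorem normalFormKernel_sq_le (s : ℝ) (ξ ξ₁ : ℤ) :
    normalFormKernel s ξ ξ₁ ^ 2 ≤
      16 * bracket ξ ^ (-(2 * s)) *
        (bracket ξ₁ ^ (-(2 - 2 * s)) * bracket (ξ - ξ₁) ^ (-(2 - 2 * s))) := by
  unfold normalFormKernel
  split_ifs with h
  · obtain ⟨h₁, h₂⟩ := h
    have h₂' : ξ - ξ₁ ≠ 0 := sub_ne_zero.mpr h₂.symm
    have hu := bracket_le_two_mul_abs h₁
    have hv := bracket_le_two_mul_abs h₂'
    set u := bracket ξ₁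
    set v := bracket (ξ - ξ₁)
    set w := bracket ξ
    have hu0 : 0 < u := bracket_pos _
    have hv0 : 0 < v := bracket_pos _
    have hw0 : 0 < w := bracket_pos _
    have hsq : ∀ {t : ℝ}, 0 < t → (t ^ s) ^ 2 = t ^ (2 * s) := fun ht => by
      rw [← rpow_natCast, ← rpow_mul ht.le, mul_comm]; norm_num
    have hneg : ∀ {t : ℝ}, 0 < t → t ^ (-(2 - 2 * s)) = t ^ (2 * s) / t ^ 2 := fun ht => by
      rw [neg_sub, rpow_sub ht, rpow_two]
    rw [div_pow, mul_pow, mul_pow, mul_pow, hsq hu0, hsq hv0, hsq hw0, hneg hu0, hneg hv0,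
      rpow_neg hw0.le, ← sq_abs (ξ₁ : ℝ), ← sq_abs ((ξ - ξ₁ : ℤ) : ℝ)]
    set x := |(ξ₁ : ℝ)|
    set y := |((ξ - ξ₁ : ℤ) : ℝ)|
    have hx : 0 < x := abs_pos.mpr (by exact_mod_cast h₁)
    have hy : 0 < y := abs_pos.mpr (by exact_mod_cast h₂')
    have huv : u ^ 2 * v ^ 2 ≤ 16 * (x ^ 2 * y ^ 2) := by
      calc u ^ 2 * v ^ 2 ≤ (2 * x) ^ 2 * (2 * y) ^ 2 := by gcongr
        _ = 16 * (x ^ 2 * y ^ 2) := by ring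
    rw [div_le_iff₀ (by positivity)]
    calc u ^ (2 * s) * v ^ (2 * s)
        ≤ u ^ (2 * s) * v ^ (2 * s) * (16 * (x ^ 2 * y ^ 2) / (u ^ 2 * v ^ 2)) :=
          le_mul_of_one_le_right (by positivity) ((one_le_div (by positivity)).mpr huv)
      _ = _ := by field_simp
  · rw [zero_pow two_ne_zero]
    have := bracket_pos ξ; have := bracket_pos ξ₁; have := bracket_pos (ξ - ξ₁)
    positivity

theorem summable_normalFormKernel_sq {s : ℝ} (hs : s < 1 / 2) (ξ : ℤ) :
    Summable fun ξ₁ => normalFormKernel s ξ ξ₁ ^ 2 :=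
  ((summable_bracket_rpow_neg_mul_sub (by linarith) ξ).mul_left _).of_nonneg_of_le
    (fun _ => sq_nonneg _) (normalFormKernel_sq_le s ξ)

theorem bracket_sq_mul_tsum_normalFormKernel_sq_le {s : ℝ} (hs : s < 1 / 2) (ξ : ℤ) :
    bracket ξ ^ 2 * ∑' ξ₁, normalFormKernel s ξ ξ₁ ^ 2 ≤
      32 * 2 ^ (2 - 2 * s) * ∑' n : ℤ, bracket n ^ (-(2 - 2 * s)) := by
  have hα : 1 < 2 - 2 * s := by linarith
  set S := ∑' n : ℤ, bracket n ^ (-(2 - 2 * s))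
  have hw := bracket_pos ξ
  have hpow : bracket ξ ^ 2 * (bracket ξ ^ (-(2 * s)) * bracket ξ ^ (-(2 - 2 * s))) = 1 := by
    rw [← rpow_add hw, ← rpow_two, ← rpow_add hw,
      show (2 : ℝ) + (-(2 * s) + -(2 - 2 * s)) = 0 by ring, rpow_zero]
  calc bracket ξ ^ 2 * ∑' ξ₁, normalFormKernel s ξ ξ₁ ^ 2
      ≤ bracket ξ ^ 2 * ∑' ξ₁, 16 * bracket ξ ^ (-(2 * s)) *
          (bracket ξ₁ ^ (-(2 - 2 * s)) * bracket (ξ - ξ₁) ^ (-(2 - 2 * s))) := by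
        refine mul_le_mul_of_nonneg_left ?_ (by positivity)
        exact Summable.tsum_le_tsum (normalFormKernel_sq_le s ξ)
          (summable_normalFormKernel_sq hs ξ) ((summable_bracket_rpow_neg_mul_sub hα ξ).mul_left _)
    _ ≤ bracket ξ ^ 2 * (16 * bracket ξ ^ (-(2 * s)) *
          (2 ^ (2 - 2 * s) * bracket ξ ^ (-(2 - 2 * s)) * (2 * S))) := by
        rw [tsum_mul_left]
        gcongr
        exact tsum_bracket_rpow_neg_mul_sub_le hα ξ
    _ = 32 * 2 ^ (2 - 2 * s) * S *
          (bracket ξ ^ 2 * (bracket ξ ^ (-(2 * s)) * bracket ξ ^ (-(2 - 2 * s)))) := by ring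
    _ = 32 * 2 ^ (2 - 2 * s) * S := by rw [hpow, mul_one]

theorem stmt0_general (s : ℝ) (hs : s < 1/2) :
    ∃ C : ℝ, 0 < C ∧ ∀ a b : ℤ → ℂ,
      Summable (fun ξ : ℤ => ‖a ξ‖ ^ 2) → Summable (fun ξ : ℤ => ‖b ξ‖ ^ 2) →
      (∑' ξ : ℤ, (if ξ ≠ 0 then
          (1 + |(ξ : ℝ)|) ^ 2 *
            ‖∑' ξ₁ : ℤ, (if ξ₁ ≠ 0 ∧ ξ₁ ≠ ξ then
              (((1 + |(ξ₁ : ℝ)|) ^ s * (1 + |((ξ - ξ₁ : ℤ) : ℝ)|) ^ s /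
                  ((1 + |(ξ : ℝ)|) ^ s * (ξ₁ : ℝ) * ((ξ - ξ₁ : ℤ) : ℝ)) : ℝ) : ℂ) *
                a ξ₁ * b (ξ - ξ₁)
              else 0)‖ ^ 2
        else 0))
      ≤ C * (∑' ξ : ℤ, ‖a ξ‖ ^ 2) * (∑' ξ : ℤ, ‖b ξ‖ ^ 2) := by
  have hS : 0 < ∑' n : ℤ, bracket n ^ (-(2 - 2 * s)) :=
    (summable_bracket_rpow_neg (by linarith)).tsum_pos
      (fun n => rpow_nonneg (bracket_pos n).le _) 0 (rpow_pos_of_pos (bracket_pos 0) _)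
  refine ⟨32 * 2 ^ (2 - 2 * s) * ∑' n : ℤ, bracket n ^ (-(2 - 2 * s)), by positivity,
    fun a b ha hb => ?_⟩
  have hnorm : ∀ ξ ξ₁, ‖(normalFormKernel s ξ ξ₁ : ℂ)‖ ^ 2 = normalFormKernel s ξ ξ₁ ^ 2 :=
    fun ξ ξ₁ => by rw [Complex.norm_real, norm_eq_abs, sq_abs]
  have key := tsum_mul_norm_tsum_bilinear_sq_le (K := fun ξ ξ₁ => (normalFormKernel s ξ ξ₁ : ℂ))
    (w := fun ξ => if ξ ≠ 0 then bracket ξ ^ 2 else 0)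
    (fun ξ => by split_ifs <;> positivity)
    (fun ξ => by simpa only [hnorm] using summable_normalFormKernel_sq hs ξ)
    (fun ξ => by
      simp only [hnorm]
      split_ifs
      · exact bracket_sq_mul_tsum_normalFormKernel_sq_le hs ξ
      · rw [zero_mul]; positivity)
    ha hb
  simpa only [normalFormKernel, bracket, apply_ite (fun x : ℝ => (x : ℂ)), Complex.ofReal_zero,
    ite_zero_mul] using key

/-- Lemma 3.1 (Fourier-coefficient form): the bilinear normal-form operator `T`,
with symbol `⟨ξ₁⟩^s ⟨ξ₂⟩^s / (⟨ξ₁+ξ₂⟩^s ξ₁ ξ₂)` restricted to `ξ₁ ξ₂ (ξ₁+ξ₂) ≠ 0`,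
maps `L²(𝕋) × L²(𝕋)` boundedly into `H¹(𝕋)`. -/
theorem stmt0 (s : ℝ) (hs0 : 0 ≤ s) (hs : s < 1/2) :
    ∃ C : ℝ, 0 < C ∧ ∀ a b : ℤ → ℂ,
      Summable (fun ξ : ℤ => ‖a ξ‖ ^ 2) → Summable (fun ξ : ℤ => ‖b ξ‖ ^ 2) →
      (∑' ξ : ℤ, (if ξ ≠ 0 then
          (1 + |(ξ : ℝ)|) ^ 2 *
            ‖∑' ξ₁ : ℤ, (if ξ₁ ≠ 0 ∧ ξ₁ ≠ ξ then
              (((1 + |(ξ₁ : ℝ)|) ^ s * (1 + |((ξ - ξ₁ : ℤ) : ℝ)|) ^ s /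
                  ((1 + |(ξ : ℝ)|) ^ s * (ξ₁ : ℝ) * ((ξ - ξ₁ : ℤ) : ℝ)) : ℝ) : ℂ) *
                a ξ₁ * b (ξ - ξ₁)
              else 0)‖ ^ 2
        else 0))
      ≤ C * (∑' ξ : ℤ, ‖a ξ‖ ^ 2) * (∑' ξ : ℤ, ‖b ξ‖ ^ 2) :=
  stmt0_general s hs
end

section
/- Let 0 ≤ s < 1/2 and 0 < ε ≤ 1/2 − s. Then the quantity M := sup { (⟨ξ₁⟩^s ⟨ξ−ξ₁⟩^s ⟨ξ⟩^{1−s}) / (|ξ₁| · |ξ−ξ₁|^{1/2−ε}) : ξ, ξ₁ ∈ ℤ, ξ·ξ₁·(ξ−ξ₁) ≠ 0, |ξ₁| ≥ |ξ−ξ₁| } is finite; i.e., there is a constant C = C(s, ε) such that ⟨ξ₁⟩^s ⟨ξ−ξ₁⟩^s ⟨ξ⟩^{1−s} ≤ C |ξ₁| |ξ−ξ₁|^{1/2−ε} for all integers ξ, ξ₁ with ξ·ξ₁·(ξ−ξ₁) ≠ 0 and |ξ₁| ≥ |ξ−ξ₁|. -/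
/-!
Write `a = |ξ₁|`, `b = |ξ - ξ₁|`, so `1 ≤ b ≤ a` and `|ξ| ≤ a + b ≤ 2a`. Both `⟨ξ₁⟩` and `⟨ξ⟩`
are then at most `3a`, so by weighted AM-GM `⟨ξ₁⟩^s ⟨ξ⟩^{1-s} ≤ 3a`, while
`⟨ξ - ξ₁⟩^s ≤ 2^s b^s ≤ 2^s b^{1/2-ε}` because `b ≥ 1` and `s ≤ 1/2 - ε`.
-/

namespace Real

lemma rpow_mul_rpow_one_sub_le {x y z s : ℝ} (hx : 0 ≤ x) (hy : 0 ≤ y) (hxz : x ≤ z)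
    (hyz : y ≤ z) (hs0 : 0 ≤ s) (hs1 : s ≤ 1) : x ^ s * y ^ (1 - s) ≤ z :=
  calc x ^ s * y ^ (1 - s) ≤ s * x + (1 - s) * y :=
        geom_mean_le_arith_mean2_weighted hs0 (by linarith) hx hy (by ring)
    _ ≤ s * z + (1 - s) * z := by gcongr
    _ = z := by ring

lemma one_add_rpow_le_rpow {x s t : ℝ} (hx : 1 ≤ x) (hs : 0 ≤ s) (hst : s ≤ t) :
    (1 + x) ^ s ≤ 2 ^ s * x ^ t :=
  calc (1 + x) ^ s ≤ (2 * x) ^ s := rpow_le_rpow (by positivity) (by linarith) hs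
    _ = 2 ^ s * x ^ s := mul_rpow zero_le_two (by positivity)
    _ ≤ 2 ^ s * x ^ t := by gcongr

end Real

open Real in
lemma one_add_rpow_mul_le {a b c s t : ℝ} (hb : 1 ≤ b) (hba : b ≤ a) (hc : 0 ≤ c)
    (hcab : c ≤ a + b) (hs0 : 0 ≤ s) (hs1 : s ≤ 1) (hst : s ≤ t) :
    (1 + a) ^ s * (1 + b) ^ s * (1 + c) ^ (1 - s) ≤ 3 * 2 ^ s * a * b ^ t := by
  have hac : (1 + a) ^ s * (1 + c) ^ (1 - s) ≤ 3 * a :=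
    rpow_mul_rpow_one_sub_le (by linarith) (by linarith) (by linarith) (by linarith) hs0 hs1
  have hb' : (1 + b) ^ s ≤ 2 ^ s * b ^ t := one_add_rpow_le_rpow hb hs0 hst
  calc (1 + a) ^ s * (1 + b) ^ s * (1 + c) ^ (1 - s)
      = ((1 + a) ^ s * (1 + c) ^ (1 - s)) * (1 + b) ^ s := by ring
    _ ≤ (3 * a) * (2 ^ s * b ^ t) := mul_le_mul hac hb' (by positivity) (by linarith)
    _ = 3 * 2 ^ s * a * b ^ t := by ring

theorem stmt1_general (s ε : ℝ) (hs0 : 0 ≤ s) (hs : s < 1/2) (hε : ε ≤ 1/2 - s) :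
    ∃ C : ℝ, 0 < C ∧ ∀ ξ ξ₁ : ℤ, ξ * ξ₁ * (ξ - ξ₁) ≠ 0 → |ξ - ξ₁| ≤ |ξ₁| →
      (1 + |(ξ₁ : ℝ)|) ^ s * (1 + |((ξ - ξ₁ : ℤ) : ℝ)|) ^ s * (1 + |(ξ : ℝ)|) ^ (1 - s)
        ≤ C * |(ξ₁ : ℝ)| * |((ξ - ξ₁ : ℤ) : ℝ)| ^ (1/2 - ε) := by
  refine ⟨3 * 2 ^ s, by positivity, fun ξ ξ₁ hne hle => ?_⟩
  have hdiff : ξ - ξ₁ ≠ 0 := right_ne_zero_of_mul hne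
  have hb : (1 : ℝ) ≤ |((ξ - ξ₁ : ℤ) : ℝ)| := by
    rw [← Int.cast_abs]; exact_mod_cast Int.one_le_abs hdiff
  have hba : |((ξ - ξ₁ : ℤ) : ℝ)| ≤ |(ξ₁ : ℝ)| := by
    simp only [← Int.cast_abs]; exact_mod_cast hle
  have hcab : |(ξ : ℝ)| ≤ |(ξ₁ : ℝ)| + |((ξ - ξ₁ : ℤ) : ℝ)| := by
    simpa using abs_add_le (ξ₁ : ℝ) ((ξ - ξ₁ : ℤ) : ℝ)
  exact one_add_rpow_mul_le hb hba (abs_nonneg _) hcab hs0 (by linarith) (by linarith)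

/-- The multiplier bound used in the proof of Lemma 3.1: for `0 ≤ s < 1/2` and
`0 < ε ≤ 1/2 - s`, the quantity
`⟨ξ₁⟩^s ⟨ξ-ξ₁⟩^s ⟨ξ⟩^{1-s} / (|ξ₁| |ξ-ξ₁|^{1/2-ε})` is bounded over all integers
`ξ, ξ₁` with `ξ ξ₁ (ξ-ξ₁) ≠ 0` and `|ξ₁| ≥ |ξ-ξ₁|`. -/
theorem stmt1 (s ε : ℝ) (hs0 : 0 ≤ s) (hs : s < 1/2) (hε0 : 0 < ε) (hε : ε ≤ 1/2 - s) :
    ∃ C : ℝ, 0 < C ∧ ∀ ξ ξ₁ : ℤ, ξ * ξ₁ * (ξ - ξ₁) ≠ 0 → |ξ - ξ₁| ≤ |ξ₁| →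
      (1 + |(ξ₁ : ℝ)|) ^ s * (1 + |((ξ - ξ₁ : ℤ) : ℝ)|) ^ s * (1 + |(ξ : ℝ)|) ^ (1 - s)
        ≤ C * |(ξ₁ : ℝ)| * |((ξ - ξ₁ : ℤ) : ℝ)| ^ (1/2 - ε) :=
  stmt1_general s ε hs0 hs hε
end

section
/- Let s ∈ ℝ and let a : ℤ → ℂ be a finitely supported sequence with a₀ = 0 and a_{−k} = conj(a_k) for all k ∈ ℤ. Then for every nonzero ξ ∈ ℤ, Σ_{ξ₁+ξ₂+ξ₃=ξ, ξ₁+ξ₂≠0, ξ₃≠0} (⟨ξ₁⟩^s ⟨ξ₂⟩^s ⟨ξ₃⟩^s)/(i ξ₃ ⟨ξ⟩^s) · a_{ξ₁} a_{ξ₂} a_{ξ₃} = Σ_{ξ₁+ξ₂+ξ₃=ξ, (ξ₁+ξ₂)(ξ₂+ξ₃)(ξ₃+ξ₁)≠0, ξ₃≠0} (⟨ξ₁⟩^s ⟨ξ₂⟩^s ⟨ξ₃⟩^s)/(i ξ₃ ⟨ξ⟩^s) · a_{ξ₁} a_{ξ₂} a_{ξ₃} − (⟨ξ⟩^{2s}/(i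 ξ)) |a_ξ|² a_ξ. (That is, the trilinear expression splits exactly into the nonresonant part and the single resonant term −⟨ξ⟩^{2s}/(iξ) · |a_ξ|² a_ξ; the remaining resonant contributions cancel by oddness.) -/
/-! With `ξ₃ = ξ - ξ₁ - ξ₂` one has `ξ₂ + ξ₃ = ξ - ξ₁` and `ξ₃ + ξ₁ = ξ - ξ₂`, so the two sums
differ exactly by the terms on the lines `ξ₁ = ξ` and `ξ₂ = ξ`. On the line `ξ₁ = ξ` the summand
is `c k = trilSym s ξ ξ k (-k) · a_ξ a_k a_{-k}`, which is odd in `k` because `⟨·⟩` is even and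
`1/ξ₃` is odd. Hence its sum over `k ≠ -ξ` (the point excluded by `ξ₁ + ξ₂ ≠ 0`; the point
`k = 0` excluded by `ξ₃ ≠ 0` contributes nothing as `a₀ = 0`) is `c ξ`. The line `ξ₂ = ξ` gives
`c ξ` as well by the symmetry `ξ₁ ↔ ξ₂`, and after removing the doubly counted corner `(ξ, ξ)`
the difference is `c ξ = -⟨ξ⟩^{2s}/(iξ) |a_ξ|² a_ξ`, using `a_{-ξ} = conj a_ξ`. -/

/-- The Japanese bracket `⟨ξ⟩ = 1 + |ξ|`. -/
noncomputable def jbr (ξ : ℤ) : ℝ := 1 + |(ξ : ℝ)|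

/-- The trilinear symbol `⟨ξ₁⟩^s ⟨ξ₂⟩^s ⟨ξ₃⟩^s / (i ξ₃ ⟨ξ⟩^s)`. -/
noncomputable def trilSym (s : ℝ) (ξ ξ₁ ξ₂ ξ₃ : ℤ) : ℂ :=
  ((jbr ξ₁ ^ s * jbr ξ₂ ^ s * jbr ξ₃ ^ s : ℝ) : ℂ) /
    (Complex.I * (ξ₃ : ℂ) * ((jbr ξ ^ s : ℝ) : ℂ))

section OddSums

variable {M : Type*} [AddCommGroup M] [TopologicalSpace M] [IsTopologicalAddGroup M]
  [T2Space M] [IsAddTorsionFree M] {c : ℤ → M}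

theorem tsum_eq_zero_of_odd (hodd : ∀ k, c (-k) = -c k) : ∑' k, c k = 0 := by
  have h : ∑' k, c (-k) = ∑' k, c k := (Equiv.neg ℤ).tsum_eq c
  rwa [tsum_congr hodd, tsum_neg, neg_eq_self] at h

theorem tsum_ite_eq_neg_of_odd (hc : Summable c) (hodd : ∀ k, c (-k) = -c k) (x : ℤ) :
    ∑' k, ite (k = -x) 0 (c k) = c x := by
  have h := hc.tsum_eq_add_tsum_ite (-x)
  rw [tsum_eq_zero_of_odd hodd, hodd] at h
  exact (neg_add_eq_zero.1 h.symm).symm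

end OddSums

theorem tsum_indicator_row_union_col {α β M : Type*} [AddCommGroup M] [UniformSpace M]
    [IsUniformAddGroup M] [CompleteSpace M] [T2Space M] {f : α × β → M} (hf : Summable f)
    (x : α) (y : β) :
    ∑' p, ({p | p.1 = x} ∪ {p | p.2 = y}).indicator f p
      = ∑' b, f (x, b) + ∑' a, f (a, y) - f (x, y) := by
  have hrow : ∑' p, {p : α × β | p.1 = x}.indicator f p = ∑' b, f (x, b) := by
    rw [← (Prod.mk_right_injective x).tsum_eq]
    · simp [Set.indicator]
    · intro p hp
      exact ⟨p.2, Prod.ext (Set.mem_of_indicator_ne_zero hp).symm rfl⟩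
  have hcol : ∑' p, {p : α × β | p.2 = y}.indicator f p = ∑' a, f (a, y) := by
    rw [← (Prod.mk_left_injective y).tsum_eq]
    · simp [Set.indicator]
    · intro p hp
      exact ⟨p.1, Prod.ext rfl (Set.mem_of_indicator_ne_zero hp).symm⟩
  have hcorner : ∑' p, ({p : α × β | p.1 = x} ∩ {p | p.2 = y}).indicator f p = f (x, y) := by
    have : {p : α × β | p.1 = x} ∩ {p | p.2 = y} = {(x, y)} := by ext; simp [Prod.ext_iff]
    rw [this, ← tsum_subtype, tsum_singleton]
  rw [eq_sub_iff_add_eq, ← hrow, ← hcol, ← hcorner, ← (hf.indicator _).tsum_add (hf.indicator _),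
    ← (hf.indicator _).tsum_add (hf.indicator _)]
  exact tsum_congr fun p => Set.indicator_union_add_inter_apply f _ _ p

lemma jbr_pos (ξ : ℤ) : 0 < jbr ξ := by unfold jbr; positivity

lemma jbr_neg (ξ : ℤ) : jbr (-ξ) = jbr ξ := by simp [jbr]

lemma trilSym_comm (s : ℝ) (ξ ξ₁ ξ₂ ξ₃ : ℤ) : trilSym s ξ ξ₁ ξ₂ ξ₃ = trilSym s ξ ξ₂ ξ₁ ξ₃ := by
  simp only [trilSym, mul_comm (jbr ξ₁ ^ s)]

lemma trilSym_neg_neg (s : ℝ) (ξ ξ₁ ξ₂ ξ₃ : ℤ) :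
    trilSym s ξ ξ₁ (-ξ₂) (-ξ₃) = -trilSym s ξ ξ₁ ξ₂ ξ₃ := by
  simp only [trilSym, jbr_neg, Int.cast_neg, mul_neg, neg_mul, div_neg]

lemma trilSym_self_self_neg (s : ℝ) (ξ : ℤ) :
    trilSym s ξ ξ ξ (-ξ) = -((jbr ξ ^ (2 * s) : ℝ) : ℂ) / (Complex.I * ξ) := by
  rw [trilSym, jbr_neg, two_mul, Real.rpow_add (jbr_pos ξ)]
  push_cast
  field_simp

lemma resonance_factor_ne_zero_iff (ξ x y : ℤ) :
    (x + y) * (y + (ξ - x - y)) * ((ξ - x - y) + x) ≠ 0 ↔ x + y ≠ 0 ∧ x ≠ ξ ∧ y ≠ ξ := by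
  simp only [ne_eq, mul_eq_zero, not_or]
  constructor <;> intro h <;> omega

section Trilinear

variable (s : ℝ) (a : ℤ → ℂ) (ξ : ℤ)

noncomputable def trilSummand (p : ℤ × ℤ) : ℂ :=
  if p.1 + p.2 ≠ 0 ∧ ξ - p.1 - p.2 ≠ 0 then
    trilSym s ξ p.1 p.2 (ξ - p.1 - p.2) * a p.1 * a p.2 * a (ξ - p.1 - p.2) else 0

noncomputable def resonantLineTerm (k : ℤ) : ℂ :=
  trilSym s ξ ξ k (-k) * a ξ * a k * a (-k)

variable {s a ξ}

lemma summable_trilSummand (hfin : (Function.support a).Finite) :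
    Summable (trilSummand s a ξ) := by
  refine summable_of_hasFiniteSupport ((hfin.prod hfin).subset fun p hp => ?_)
  simp only [Function.mem_support, trilSummand, ne_eq, ite_eq_right_iff, not_forall] at hp
  obtain ⟨-, hp⟩ := hp
  exact ⟨fun h => hp (by simp [h]), fun h => hp (by simp [h])⟩

lemma summable_resonantLineTerm (hfin : (Function.support a).Finite) :
    Summable (resonantLineTerm s a ξ) := by
  refine summable_of_hasFiniteSupport (hfin.subset fun k hk => ?_)
  simp only [Function.mem_support, resonantLineTerm] at hk ⊢
  exact fun h => hk (by simp [h])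

lemma resonantLineTerm_neg (k : ℤ) : resonantLineTerm s a ξ (-k) = -resonantLineTerm s a ξ k := by
  have h := trilSym_neg_neg s ξ ξ k (-k)
  rw [neg_neg] at h
  simp only [resonantLineTerm, neg_neg, h]
  ring

lemma resonantLineTerm_self (hsym : ∀ k : ℤ, a (-k) = starRingEnd ℂ (a k)) :
    resonantLineTerm s a ξ ξ
      = -(((jbr ξ ^ (2 * s) : ℝ) : ℂ) / (Complex.I * (ξ : ℂ)) * ((‖a ξ‖ ^ 2 : ℝ) : ℂ) * a ξ) := by
  have hnorm : a ξ * starRingEnd ℂ (a ξ) = ((‖a ξ‖ ^ 2 : ℝ) : ℂ) := by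
    rw [Complex.mul_conj']
    push_cast
    rfl
  simp only [resonantLineTerm, trilSym_self_self_neg, hsym, ← hnorm]
  ring

lemma trilSummand_swap (p : ℤ × ℤ) : trilSummand s a ξ p.swap = trilSummand s a ξ p := by
  obtain ⟨x, y⟩ := p
  simp only [trilSummand, Prod.swap, trilSym_comm s ξ y x]
  ring_nf

lemma trilSummand_self_left (h0 : a 0 = 0) (k : ℤ) :
    trilSummand s a ξ (ξ, k) = ite (k = -ξ) 0 (resonantLineTerm s a ξ k) := by
  have hz : ξ - ξ - k = -k := by ring
  simp only [trilSummand, resonantLineTerm, hz]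
  by_cases hk : k = -ξ
  · simp [hk]
  by_cases hk0 : k = 0
  · simp [hk0, h0]
  rw [if_pos ⟨by omega, by omega⟩, if_neg hk]

lemma indicator_compl_resonant_trilSummand (p : ℤ × ℤ) :
    ({p : ℤ × ℤ | p.1 = ξ} ∪ {p | p.2 = ξ})ᶜ.indicator (trilSummand s a ξ) p
      = if (p.1 + p.2) * (p.2 + (ξ - p.1 - p.2)) * ((ξ - p.1 - p.2) + p.1) ≠ 0 ∧
          ξ - p.1 - p.2 ≠ 0 then
        trilSym s ξ p.1 p.2 (ξ - p.1 - p.2) * a p.1 * a p.2 * a (ξ - p.1 - p.2) else 0 := by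
  simp only [Set.indicator, Set.mem_compl_iff, Set.mem_union, Set.mem_ofPred_eq, trilSummand,
    resonance_factor_ne_zero_iff]
  split_ifs <;> tauto

lemma tsum_indicator_resonant_trilSummand (hfin : (Function.support a).Finite) (h0 : a 0 = 0)
    (hξ : ξ ≠ 0) :
    ∑' p, ({p : ℤ × ℤ | p.1 = ξ} ∪ {p | p.2 = ξ}).indicator (trilSummand s a ξ) p
      = resonantLineTerm s a ξ ξ := by
  have hcol (k : ℤ) : trilSummand s a ξ (k, ξ) = ite (k = -ξ) 0 (resonantLineTerm s a ξ k) :=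
    (trilSummand_swap (ξ, k)).trans (trilSummand_self_left h0 k)
  rw [tsum_indicator_row_union_col (summable_trilSummand hfin),
    tsum_congr (trilSummand_self_left h0), tsum_congr hcol, trilSummand_self_left h0,
    if_neg (by omega),
    tsum_ite_eq_neg_of_odd (summable_resonantLineTerm hfin) resonantLineTerm_neg]
  ring

end Trilinear

/-- Resonant/nonresonant decomposition of Section 3.1: for a finitely supported,
mean-zero, real-symmetric sequence of Fourier coefficients, the trilinear sum over
`ξ₁+ξ₂+ξ₃ = ξ` with `ξ₁+ξ₂ ≠ 0`, `ξ₃ ≠ 0` splits into the nonresonant part plus the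
single resonant term `-⟨ξ⟩^{2s}/(iξ) |a_ξ|² a_ξ`.  (Triples are parametrized by
`(ξ₁, ξ₂)` with `ξ₃ = ξ - ξ₁ - ξ₂`.) -/
theorem stmt4 (s : ℝ) (a : ℤ → ℂ) (hfin : (Function.support a).Finite)
    (h0 : a 0 = 0) (hsym : ∀ k : ℤ, a (-k) = starRingEnd ℂ (a k))
    (ξ : ℤ) (hξ : ξ ≠ 0) :
    (∑' p : ℤ × ℤ, if p.1 + p.2 ≠ 0 ∧ ξ - p.1 - p.2 ≠ 0 then
        trilSym s ξ p.1 p.2 (ξ - p.1 - p.2) * a p.1 * a p.2 * a (ξ - p.1 - p.2) else 0)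
    = (∑' p : ℤ × ℤ, if
          (p.1 + p.2) * (p.2 + (ξ - p.1 - p.2)) * ((ξ - p.1 - p.2) + p.1) ≠ 0 ∧
            ξ - p.1 - p.2 ≠ 0 then
        trilSym s ξ p.1 p.2 (ξ - p.1 - p.2) * a p.1 * a p.2 * a (ξ - p.1 - p.2) else 0)
      - ((jbr ξ ^ (2 * s) : ℝ) : ℂ) / (Complex.I * (ξ : ℂ)) * ((‖a ξ‖ ^ 2 : ℝ) : ℂ) * a ξ := by
  set R : Set (ℤ × ℤ) := {p | p.1 = ξ} ∪ {p | p.2 = ξ}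
  have hG := summable_trilSummand (s := s) (ξ := ξ) hfin
  calc ∑' p, trilSummand s a ξ p
      = ∑' p, Rᶜ.indicator (trilSummand s a ξ) p + ∑' p, R.indicator (trilSummand s a ξ) p := by
        rw [← (hG.indicator _).tsum_add (hG.indicator _)]
        exact tsum_congr fun p => (Set.indicator_compl_add_self_apply R _ p).symm
    _ = _ := by
      rw [tsum_congr indicator_compl_resonant_trilSummand,
        tsum_indicator_resonant_trilSummand hfin h0 hξ, resonantLineTerm_self hsym]
      ring
end

section
/- Let s ∈ ℝ and let a, b : ℝ → (ℤ → ℂ) be maps such that for each t, a(t) and b(t) are supported in a fixed finite set of frequencies, and for each ξ the functions t ↦ a_ξ(t) and t ↦ b_ξ(t) are differentiable. For ξ ≠ 0 define T(a,b)_ξ(t) := Σ_{ξ₁+ξ₂=ξ, ξ₁≠0, ξ₂≠0} (⟨ξ₁⟩^s ⟨ξ₂⟩^s)/(⟨ξ⟩^s ξ₁ ξ₂) · a_{ξ₁}(t) b_{ξ₂}(t), and for any such map c define (Lc)_ξ(t) := c_ξ′(t) − i ξ³ c_ξ(t). Then for every ξ ≠ 0 and every t, (L T(a,b))_ξ(t)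 = T(La, b)_ξ(t) + T(a, Lb)_ξ(t) − (3 i ξ / ⟨ξ⟩^s) Σ_{ξ₁+ξ₂=ξ, ξ₁≠0, ξ₂≠0} ⟨ξ₁⟩^s ⟨ξ₂⟩^s a_{ξ₁}(t) b_{ξ₂}(t). -/
/-!
Since `a` has finite support, every series is a finite sum and may be differentiated termwise.
On each term the product rule gives `T(La, b) + T(a, Lb)` up to the phase
`ξ³ - ξ₁³ - ξ₂³ = 3 ξ ξ₁ ξ₂` (for `ξ₁ + ξ₂ = ξ`), whose factor `ξ₁ ξ₂` cancels the denominator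
of the symbol of `T`.
-/

/-- Fourier coefficients of the normal form `T(a,b)`:
`T(a,b)_ξ(t) = Σ_{ξ₁+ξ₂=ξ, ξ₁ξ₂≠0} ⟨ξ₁⟩^s ⟨ξ₂⟩^s / (⟨ξ⟩^s ξ₁ ξ₂) a_{ξ₁}(t) b_{ξ₂}(t)`. -/
noncomputable def Tcf (s : ℝ) (a b : ℝ → ℤ → ℂ) (ξ : ℤ) (t : ℝ) : ℂ :=
  ∑' ξ₁ : ℤ, if ξ₁ ≠ 0 ∧ ξ - ξ₁ ≠ 0 then
    (((1 + |(ξ₁ : ℝ)|) ^ s * (1 + |((ξ - ξ₁ : ℤ) : ℝ)|) ^ s / (1 + |(ξ : ℝ)|) ^ s : ℝ) : ℂ)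
      / ((ξ₁ : ℂ) * ((ξ - ξ₁ : ℤ) : ℂ)) * a t ξ₁ * b t (ξ - ξ₁)
  else 0

/-- Fourier-coefficient form of the Airy operator `∂_t + ∂_xxx` on the mode `e^{iξx}`:
`(Lc)_ξ(t) = c_ξ'(t) - i ξ³ c_ξ(t)`. -/
noncomputable def Lcf (c : ℝ → ℤ → ℂ) : ℝ → ℤ → ℂ :=
  fun t ξ => deriv (fun τ => c τ ξ) t - Complex.I * (ξ : ℂ) ^ 3 * c t ξ

section NormalForm

variable (s : ℝ) (ξ : ℤ)

noncomputable def resonanceWeight (ξ₁ : ℤ) : ℂ :=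
  (((1 + |(ξ₁ : ℝ)|) ^ s * (1 + |((ξ - ξ₁ : ℤ) : ℝ)|) ^ s : ℝ) : ℂ)

noncomputable def normalFormSymbol (ξ₁ : ℤ) : ℂ :=
  (((1 + |(ξ₁ : ℝ)|) ^ s * (1 + |((ξ - ξ₁ : ℤ) : ℝ)|) ^ s / (1 + |(ξ : ℝ)|) ^ s : ℝ) : ℂ)
    / ((ξ₁ : ℂ) * ((ξ - ξ₁ : ℤ) : ℂ))

abbrev nonzeroSplittings (S : Finset ℤ) : Finset ℤ :=
  S.filter fun ξ₁ => ξ₁ ≠ 0 ∧ ξ - ξ₁ ≠ 0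

lemma normalFormSymbol_mul {ξ₁ : ℤ} (h₁ : ξ₁ ≠ 0) (h₂ : ξ - ξ₁ ≠ 0) :
    (ξ₁ : ℂ) * ((ξ - ξ₁ : ℤ) : ℂ) * normalFormSymbol s ξ ξ₁
      = resonanceWeight s ξ ξ₁ / (((1 + |(ξ : ℝ)|) ^ s : ℝ) : ℂ) := by
  have : ((ξ₁ : ℂ) * ((ξ - ξ₁ : ℤ) : ℂ)) ≠ 0 := by exact_mod_cast mul_ne_zero h₁ h₂
  rw [normalFormSymbol, mul_div_cancel₀ _ this, resonanceWeight]
  push_cast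
  rfl

lemma Tcf_eq_sum {u : ℝ → ℤ → ℂ} (v : ℝ → ℤ → ℂ) {S : Finset ℤ}
    (hu : ∀ τ η, η ∉ S → u τ η = 0) (τ : ℝ) :
    Tcf s u v ξ τ
      = ∑ ξ₁ ∈ nonzeroSplittings ξ S, normalFormSymbol s ξ ξ₁ * u τ ξ₁ * v τ (ξ - ξ₁) := by
  rw [Finset.sum_filter]
  exact tsum_eq_sum fun η hη => by simp [hu τ η hη]

lemma tsum_resonanceWeight_eq_sum {u : ℝ → ℤ → ℂ} (v : ℝ → ℤ → ℂ) {S : Finset ℤ}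
    (hu : ∀ τ η, η ∉ S → u τ η = 0) (τ : ℝ) :
    (∑' ξ₁ : ℤ, if ξ₁ ≠ 0 ∧ ξ - ξ₁ ≠ 0 then
        (((1 + |(ξ₁ : ℝ)|) ^ s * (1 + |((ξ - ξ₁ : ℤ) : ℝ)|) ^ s : ℝ) : ℂ) *
          u τ ξ₁ * v τ (ξ - ξ₁) else 0)
      = ∑ ξ₁ ∈ nonzeroSplittings ξ S, resonanceWeight s ξ ξ₁ * u τ ξ₁ * v τ (ξ - ξ₁) := by
  rw [Finset.sum_filter]
  exact tsum_eq_sum fun η hη => by simp [hu τ η hη]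

end NormalForm

lemma Lcf_eq_zero {c : ℝ → ℤ → ℂ} {η : ℤ} (hc : ∀ τ, c τ η = 0) (t : ℝ) : Lcf c t η = 0 := by
  simp [Lcf, hc]

lemma Lcf_const_mul_mul (a b : ℝ → ℤ → ℂ) (m : ℂ) {t : ℝ} {ξ ξ₁ : ℤ}
    (ha : DifferentiableAt ℝ (fun τ => a τ ξ₁) t)
    (hb : DifferentiableAt ℝ (fun τ => b τ (ξ - ξ₁)) t) :
    deriv (fun τ => m * a τ ξ₁ * b τ (ξ - ξ₁)) t
        - Complex.I * (ξ : ℂ) ^ 3 * (m * a t ξ₁ * b t (ξ - ξ₁))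
      = m * Lcf a t ξ₁ * b t (ξ - ξ₁) + m * a t ξ₁ * Lcf b t (ξ - ξ₁)
        - 3 * Complex.I * ξ * (ξ₁ * ((ξ - ξ₁ : ℤ) : ℂ) * m) * a t ξ₁ * b t (ξ - ξ₁) := by
  rw [((ha.hasDerivAt.const_mul m).fun_mul hb.hasDerivAt).deriv, Lcf, Lcf]
  push_cast
  ring

theorem stmt5_general (s : ℝ) (a b : ℝ → ℤ → ℂ) (S : Finset ℤ)
    (hsupp : ∀ t : ℝ, ∀ ξ : ℤ, ξ ∉ S → a t ξ = 0 ∧ b t ξ = 0)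
    (hda : ∀ ξ : ℤ, Differentiable ℝ (fun t => a t ξ))
    (hdb : ∀ ξ : ℤ, Differentiable ℝ (fun t => b t ξ))
    (ξ : ℤ) (t : ℝ) :
    Lcf (fun τ η => Tcf s a b η τ) t ξ
      = Tcf s (Lcf a) b ξ t + Tcf s a (Lcf b) ξ t
        - (3 * Complex.I * (ξ : ℂ) / (((1 + |(ξ : ℝ)|) ^ s : ℝ) : ℂ)) *
          ∑' ξ₁ : ℤ, if ξ₁ ≠ 0 ∧ ξ - ξ₁ ≠ 0 then
            (((1 + |(ξ₁ : ℝ)|) ^ s * (1 + |((ξ - ξ₁ : ℤ) : ℝ)|) ^ s : ℝ) : ℂ) *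
              a t ξ₁ * b t (ξ - ξ₁) else 0 := by
  have ha : ∀ τ η, η ∉ S → a τ η = 0 := fun τ η h => (hsupp τ η h).1
  have hLa : ∀ τ η, η ∉ S → Lcf a τ η = 0 := fun τ η h => Lcf_eq_zero (ha · η h) τ
  rw [Tcf_eq_sum s ξ b hLa, Tcf_eq_sum s ξ (Lcf b) ha,
    tsum_resonanceWeight_eq_sum s ξ b ha, Lcf]
  simp only [Tcf_eq_sum s ξ b ha]
  rw [deriv_fun_sum fun ξ₁ _ => by fun_prop, Finset.mul_sum, Finset.mul_sum,
    ← Finset.sum_sub_distrib, ← Finset.sum_add_distrib, ← Finset.sum_sub_distrib]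
  refine Finset.sum_congr rfl fun ξ₁ hξ₁ => ?_
  obtain ⟨h₁, h₂⟩ := (Finset.mem_filter.mp hξ₁).2
  rw [Lcf_const_mul_mul a b _ (hda ξ₁ t) (hdb _ t), normalFormSymbol_mul s ξ h₁ h₂]
  ring

/-- The normal-form (Leibniz) identity for the bilinear pseudo-differential operator `T`
of Section 3.1:
`L T(a,b) = T(La, b) + T(a, Lb) - (3iξ/⟨ξ⟩^s) Σ_{ξ₁+ξ₂=ξ, ξ₁ξ₂≠0} ⟨ξ₁⟩^s ⟨ξ₂⟩^s a_{ξ₁} b_{ξ₂}`. -/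
theorem stmt5 (s : ℝ) (a b : ℝ → ℤ → ℂ) (S : Finset ℤ)
    (hsupp : ∀ t : ℝ, ∀ ξ : ℤ, ξ ∉ S → a t ξ = 0 ∧ b t ξ = 0)
    (hda : ∀ ξ : ℤ, Differentiable ℝ (fun t => a t ξ))
    (hdb : ∀ ξ : ℤ, Differentiable ℝ (fun t => b t ξ))
    (ξ : ℤ) (hξ : ξ ≠ 0) (t : ℝ) :
    Lcf (fun τ η => Tcf s a b η τ) t ξ
      = Tcf s (Lcf a) b ξ t + Tcf s a (Lcf b) ξ t
        - (3 * Complex.I * (ξ : ℂ) / (((1 + |(ξ : ℝ)|) ^ s : ℝ) : ℂ)) *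
          ∑' ξ₁ : ℤ, if ξ₁ ≠ 0 ∧ ξ - ξ₁ ≠ 0 then
            (((1 + |(ξ₁ : ℝ)|) ^ s * (1 + |((ξ - ξ₁ : ℤ) : ℝ)|) ^ s : ℝ) : ℂ) *
              a t ξ₁ * b t (ξ - ξ₁) else 0 :=
  stmt5_general s a b S hsupp hda hdb ξ t
end

section
/- Let s < 1/2, γ ∈ ℝ, and N, T > 0. There exists a constant C = C(N, T, s, γ) such that for all square-summable sequences a, b : ℤ → ℂ with a₀ = b₀ = 0, ‖a‖_{ℓ²} + ‖b‖_{ℓ²} < N, and Σ_{ξ≠0} ⟨ξ⟩^{2γ} |a_ξ − b_ξ|² < ∞, and for all t ∈ [0, T], ( Σ_{ξ≠0} ⟨ξ⟩^{2γ} | a_ξ exp(2it ⟨ξ⟩^{2s} |a_ξ|²/ξ) − b_ξ exp(2it ⟨ξ⟩^{2s} |b_ξ|²/ξ) |² )^{1/2} ≤ C ( Σ_{ξ≠0} ⟨ξ⟩^{2γ} |a_ξ − b_ξ|² )^{1/2}. (This is Lemma 3.4: the resonant solution map f ↦ R[f] is Lipschitz from H^γ data to C([0,T]; H^γ) on L²-balls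 of radius N, stated at the level of Fourier coefficients; the common unimodular factor e^{itξ³} has been cancelled.) -/
/-!
The estimate holds coefficientwise. Since `e^{ix}` is 1-Lipschitz,
`|a e^{iα} - b e^{iβ}| ≤ |a - b| + |b| |α - β|`, and the two phases differ by
`2t ⟨ξ⟩^{2s} (|a|² - |b|²) / ξ`. For `s ≤ 1/2` and `ξ ≠ 0` the factor `⟨ξ⟩^{2s} / |ξ|` is at
most `2`, and `||a|² - |b|²| ≤ (|a| + |b|) |a - b|` with `|a_ξ| + |b_ξ| < N` by the `ℓ²` bound.
Hence each weighted term grows by at most the factor `(1 + 4TN²)²`.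
-/

open Complex

lemma norm_mul_exp_I_sub_mul_exp_I_le (z w : ℂ) (x y : ℝ) :
    ‖z * exp (I * x) - w * exp (I * y)‖ ≤ ‖z - w‖ + ‖w‖ * |x - y| := by
  have hsplit : z * exp (I * x) - w * exp (I * y)
      = (z - w) * exp (I * x) + w * exp (I * y) * (exp (I * ↑(x - y)) - 1) := by
    rw [mul_assoc, mul_sub, ← exp_add]
    push_cast
    ring_nf
  calc ‖z * exp (I * x) - w * exp (I * y)‖
      ≤ ‖(z - w) * exp (I * x)‖ + ‖w * exp (I * y) * (exp (I * ↑(x - y)) - 1)‖ :=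
        hsplit ▸ norm_add_le _ _
    _ ≤ ‖z - w‖ + ‖w‖ * |x - y| := by
        simp only [norm_mul, norm_exp_I_mul_ofReal, mul_one]
        gcongr
        exact Real.norm_exp_I_mul_ofReal_sub_one_le

lemma one_add_abs_rpow_le_two_mul_abs {x r : ℝ} (hx : 1 ≤ |x|) (hr : r ≤ 1) :
    (1 + |x|) ^ r ≤ 2 * |x| :=
  calc (1 + |x|) ^ r ≤ (1 + |x|) ^ (1 : ℝ) :=
        Real.rpow_le_rpow_of_exponent_le (by linarith [abs_nonneg x]) hr
    _ ≤ 2 * |x| := by rw [Real.rpow_one]; linarith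

noncomputable def resonantPhase (s t : ℝ) (ξ : ℤ) (z : ℂ) : ℝ :=
  2 * t * (1 + |(ξ : ℝ)|) ^ (2 * s) * ‖z‖ ^ 2 / (ξ : ℝ)

lemma abs_resonantPhase_sub_le {s t : ℝ} (hs : s ≤ 1 / 2) (ht : 0 ≤ t) {ξ : ℤ} (hξ : ξ ≠ 0)
    (z w : ℂ) :
    |resonantPhase s t ξ z - resonantPhase s t ξ w| ≤ 4 * t * (‖z‖ + ‖w‖) * ‖z - w‖ := by
  have hξ1 : (1 : ℝ) ≤ |(ξ : ℝ)| := by exact_mod_cast Int.one_le_abs hξ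
  have hweight : |2 * t * (1 + |(ξ : ℝ)|) ^ (2 * s) / (ξ : ℝ)| ≤ 4 * t := by
    rw [abs_div, abs_of_nonneg (by positivity), div_le_iff₀ (by linarith)]
    have := one_add_abs_rpow_le_two_mul_abs hξ1 (show 2 * s ≤ 1 by linarith)
    nlinarith
  have hsq : |‖z‖ ^ 2 - ‖w‖ ^ 2| ≤ (‖z‖ + ‖w‖) * ‖z - w‖ := by
    rw [sq_sub_sq, abs_mul, abs_of_nonneg (by positivity)]
    exact mul_le_mul_of_nonneg_left (abs_norm_sub_norm_le z w) (by positivity)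
  calc |resonantPhase s t ξ z - resonantPhase s t ξ w|
      = |2 * t * (1 + |(ξ : ℝ)|) ^ (2 * s) / (ξ : ℝ)| * |‖z‖ ^ 2 - ‖w‖ ^ 2| := by
        rw [← abs_mul, resonantPhase, resonantPhase]; ring_nf
    _ ≤ 4 * t * ((‖z‖ + ‖w‖) * ‖z - w‖) := by gcongr
    _ = 4 * t * (‖z‖ + ‖w‖) * ‖z - w‖ := by ring

lemma norm_mul_exp_resonantPhase_sub_le {s t : ℝ} (hs : s ≤ 1 / 2) (ht : 0 ≤ t) {ξ : ℤ}
    (hξ : ξ ≠ 0) (z w : ℂ) :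
    ‖z * exp (I * resonantPhase s t ξ z) - w * exp (I * resonantPhase s t ξ w)‖
      ≤ (1 + 4 * t * ‖w‖ * (‖z‖ + ‖w‖)) * ‖z - w‖ :=
  calc _ ≤ ‖z - w‖ + ‖w‖ * |resonantPhase s t ξ z - resonantPhase s t ξ w| :=
        norm_mul_exp_I_sub_mul_exp_I_le _ _ _ _
    _ ≤ ‖z - w‖ + ‖w‖ * (4 * t * (‖z‖ + ‖w‖) * ‖z - w‖) := by
        gcongr; exact abs_resonantPhase_sub_le hs ht hξ z w
    _ = _ := by ring

lemma norm_le_sqrt_tsum_norm_sq {ι E : Type*} [SeminormedAddCommGroup E] {f : ι → E}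
    (hf : Summable fun i => ‖f i‖ ^ 2) (i : ι) : ‖f i‖ ≤ √(∑' j, ‖f j‖ ^ 2) :=
  Real.le_sqrt_of_sq_le (hf.le_tsum i fun _ _ => sq_nonneg _)

lemma sqrt_tsum_le_mul_sqrt_tsum {ι : Type*} {f g : ι → ℝ} {K : ℝ} (hK : 0 ≤ K)
    (hf : ∀ i, 0 ≤ f i) (hg : Summable g) (hfg : ∀ i, f i ≤ K ^ 2 * g i) :
    √(∑' i, f i) ≤ K * √(∑' i, g i) :=
  calc √(∑' i, f i) ≤ √(∑' i, K ^ 2 * g i) :=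
        Real.sqrt_le_sqrt <| (Summable.of_nonneg_of_le hf hfg (hg.mul_left _)).tsum_le_tsum hfg
          (hg.mul_left _)
    _ = K * √(∑' i, g i) := by
        rw [tsum_mul_left, Real.sqrt_mul (sq_nonneg K), Real.sqrt_sq hK]

theorem stmt7_general (s γ N T : ℝ) (hs : s < 1/2) (hT : 0 < T) :
    ∃ C : ℝ, 0 < C ∧ ∀ a b : ℤ → ℂ, a 0 = 0 → b 0 = 0 →
      Summable (fun ξ : ℤ => ‖a ξ‖ ^ 2) → Summable (fun ξ : ℤ => ‖b ξ‖ ^ 2) →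
      (∑' ξ : ℤ, ‖a ξ‖ ^ 2) ^ ((1:ℝ)/2) + (∑' ξ : ℤ, ‖b ξ‖ ^ 2) ^ ((1:ℝ)/2) < N →
      Summable (fun ξ : ℤ => (1 + |(ξ : ℝ)|) ^ (2 * γ) * ‖a ξ - b ξ‖ ^ 2) →
      ∀ t : ℝ, t ∈ Set.Icc (0:ℝ) T →
      (∑' ξ : ℤ, if ξ ≠ 0 then (1 + |(ξ : ℝ)|) ^ (2 * γ) *
          ‖a ξ * Complex.exp (Complex.I *
              ((2 * t * (1 + |(ξ : ℝ)|) ^ (2 * s) * ‖a ξ‖ ^ 2 / (ξ : ℝ) : ℝ) : ℂ))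
            - b ξ * Complex.exp (Complex.I *
              ((2 * t * (1 + |(ξ : ℝ)|) ^ (2 * s) * ‖b ξ‖ ^ 2 / (ξ : ℝ) : ℝ) : ℂ))‖ ^ 2
        else 0) ^ ((1:ℝ)/2)
      ≤ C * (∑' ξ : ℤ, if ξ ≠ 0 then
            (1 + |(ξ : ℝ)|) ^ (2 * γ) * ‖a ξ - b ξ‖ ^ 2 else 0) ^ ((1:ℝ)/2) := by
  refine ⟨1 + 4 * T * N ^ 2, by positivity, ?_⟩
  intro a b _ _ ha hb hab hsum t ⟨ht0, htT⟩
  simp only [← Real.sqrt_eq_rpow] at hab ⊢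
  have hab_le (ξ : ℤ) : ‖a ξ‖ + ‖b ξ‖ ≤ N := by
    linarith [norm_le_sqrt_tsum_norm_sq ha ξ, norm_le_sqrt_tsum_norm_sq hb ξ]
  have hpoint {ξ : ℤ} (hξ : ξ ≠ 0) :
      ‖a ξ * exp (I * resonantPhase s t ξ (a ξ)) - b ξ * exp (I * resonantPhase s t ξ (b ξ))‖
        ≤ (1 + 4 * T * N ^ 2) * ‖a ξ - b ξ‖ := by
    refine (norm_mul_exp_resonantPhase_sub_le hs.le ht0 hξ _ _).trans ?_
    gcongr (1 + ?_) * _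
    have hab_ξ := hab_le ξ
    have hb_le : ‖b ξ‖ ≤ N := by linarith [norm_nonneg (a ξ)]
    have hN : 0 ≤ N := (norm_nonneg _).trans hb_le
    calc 4 * t * ‖b ξ‖ * (‖a ξ‖ + ‖b ξ‖) ≤ 4 * T * N * N := by gcongr
      _ = 4 * T * N ^ 2 := by ring
  refine sqrt_tsum_le_mul_sqrt_tsum (by positivity) (fun ξ => by split_ifs <;> positivity)
    (Summable.of_nonneg_of_le (fun ξ => by split_ifs <;> positivity)
      (fun ξ => by split_ifs <;> first | exact le_rfl | positivity) hsum) fun ξ => ?_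
  split_ifs with hξ
  · rw [mul_left_comm, ← mul_pow]
    gcongr
    exact hpoint hξ
  · simp

/-- Lemma 3.4 (Fourier-coefficient form): the resonant solution map `f ↦ R[f]`
is Lipschitz from `H^γ` data to `C([0,T]; H^γ)` on `L²`-balls of radius `N`
(the common unimodular factor `e^{itξ³}` has been cancelled). -/
theorem stmt7 (s γ N T : ℝ) (hs : s < 1/2) (hN : 0 < N) (hT : 0 < T) :
    ∃ C : ℝ, 0 < C ∧ ∀ a b : ℤ → ℂ, a 0 = 0 → b 0 = 0 →
      Summable (fun ξ : ℤ => ‖a ξ‖ ^ 2) → Summable (fun ξ : ℤ => ‖b ξ‖ ^ 2) →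
      (∑' ξ : ℤ, ‖a ξ‖ ^ 2) ^ ((1:ℝ)/2) + (∑' ξ : ℤ, ‖b ξ‖ ^ 2) ^ ((1:ℝ)/2) < N →
      Summable (fun ξ : ℤ => (1 + |(ξ : ℝ)|) ^ (2 * γ) * ‖a ξ - b ξ‖ ^ 2) →
      ∀ t : ℝ, t ∈ Set.Icc (0:ℝ) T →
      (∑' ξ : ℤ, if ξ ≠ 0 then (1 + |(ξ : ℝ)|) ^ (2 * γ) *
          ‖a ξ * Complex.exp (Complex.I *
              ((2 * t * (1 + |(ξ : ℝ)|) ^ (2 * s) * ‖a ξ‖ ^ 2 / (ξ : ℝ) : ℝ) : ℂ))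
            - b ξ * Complex.exp (Complex.I *
              ((2 * t * (1 + |(ξ : ℝ)|) ^ (2 * s) * ‖b ξ‖ ^ 2 / (ξ : ℝ) : ℝ) : ℂ))‖ ^ 2
        else 0) ^ ((1:ℝ)/2)
      ≤ C * (∑' ξ : ℤ, if ξ ≠ 0 then
            (1 + |(ξ : ℝ)|) ^ (2 * γ) * ‖a ξ - b ξ‖ ^ 2 else 0) ^ ((1:ℝ)/2) :=
  stmt7_general s γ N T hs hT
end

section
/- Let γ ∈ ℝ and let a, b : ℤ → ℂ be square-summable sequences. Then ( Σ_{ξ∈ℤ, ξ≠0} ⟨ξ⟩^{2γ} |a_ξ| |b_ξ| (|a_ξ|² − |b_ξ|²)² )^{1/2} ≤ ‖a‖_{ℓ²}^{1/2} ‖b‖_{ℓ²}^{1/2} (‖a‖_{ℓ²} + ‖b‖_{ℓ²}) ( Σ_{ξ≠0} ⟨ξ⟩^{2γ} |a_ξ − b_ξ|² )^{1/2}, where the right-hand side may be infinite. -/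
/-! The weights ⟨ξ⟩^{2γ} play no role: the estimate holds term by term. Writing
`x = |a_ξ|`, `y = |b_ξ|`, we have `(x² - y²)² = (x - y)² (x + y)²` with `|x - y| ≤ |a_ξ - b_ξ|`,
while `x ≤ ‖a‖`, `y ≤ ‖b‖` by `ℓ² ⊂ ℓ^∞`. Hence each summand on the left is at most
`‖a‖ ‖b‖ (‖a‖ + ‖b‖)²` times the corresponding summand on the right. -/

open ENNReal

theorem norm_le_tsum_norm_sq_rpow_half {ι E : Type*} [SeminormedAddGroup E] {c : ι → E}
    (hc : Summable fun i => ‖c i‖ ^ 2) (i : ι) :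
    ‖c i‖ ≤ (∑' j, ‖c j‖ ^ 2) ^ ((1 : ℝ) / 2) := by
  rw [← Real.sqrt_eq_rpow, Real.le_sqrt (norm_nonneg _) (tsum_nonneg fun _ => sq_nonneg _)]
  exact hc.le_tsum i fun _ _ => sq_nonneg _

theorem norm_mul_norm_mul_sq_sub_sq_le {E : Type*} [SeminormedAddCommGroup E] {u v : E} {A B : ℝ}
    (hu : ‖u‖ ≤ A) (hv : ‖v‖ ≤ B) :
    ‖u‖ * ‖v‖ * (‖u‖ ^ 2 - ‖v‖ ^ 2) ^ 2 ≤ A * B * (A + B) ^ 2 * ‖u - v‖ ^ 2 := by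
  have hdiff : (‖u‖ - ‖v‖) ^ 2 ≤ ‖u - v‖ ^ 2 :=
    sq_le_sq.mpr ((abs_norm_sub_norm_le u v).trans (le_abs_self _))
  calc ‖u‖ * ‖v‖ * (‖u‖ ^ 2 - ‖v‖ ^ 2) ^ 2
      = ‖u‖ * ‖v‖ * (‖u‖ + ‖v‖) ^ 2 * (‖u‖ - ‖v‖) ^ 2 := by ring
    _ ≤ A * B * (A + B) ^ 2 * ‖u - v‖ ^ 2 := by
      have hA : 0 ≤ A := (norm_nonneg u).trans hu
      have hB : 0 ≤ B := (norm_nonneg v).trans hv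
      gcongr

theorem ENNReal.tsum_rpow_half_le_of_le_sq_mul {ι : Type*} {f g : ι → ℝ≥0∞} {C : ℝ}
    (hC : 0 ≤ C) (h : ∀ i, f i ≤ ENNReal.ofReal (C ^ 2) * g i) :
    (∑' i, f i) ^ ((1 : ℝ) / 2) ≤ ENNReal.ofReal C * (∑' i, g i) ^ ((1 : ℝ) / 2) := by
  have hsum : ∑' i, f i ≤ ENNReal.ofReal (C ^ 2) * ∑' i, g i :=
    ENNReal.tsum_mul_left ▸ ENNReal.tsum_le_tsum h
  calc (∑' i, f i) ^ ((1 : ℝ) / 2)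
      ≤ (ENNReal.ofReal (C ^ 2) * ∑' i, g i) ^ ((1 : ℝ) / 2) := by gcongr
    _ = ENNReal.ofReal C * (∑' i, g i) ^ ((1 : ℝ) / 2) := by
      rw [ENNReal.mul_rpow_of_nonneg _ _ (by norm_num),
        ENNReal.ofReal_rpow_of_nonneg (sq_nonneg C) (by norm_num), ← Real.sqrt_eq_rpow,
        Real.sqrt_sq hC]

/-- The estimate for the term (3.5) in the proof of Lemma 3.4:
`(Σ_{ξ≠0} ⟨ξ⟩^{2γ} |a_ξ||b_ξ|(|a_ξ|²-|b_ξ|²)²)^{1/2}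
  ≤ ‖a‖^{1/2} ‖b‖^{1/2} (‖a‖+‖b‖) (Σ_{ξ≠0} ⟨ξ⟩^{2γ} |a_ξ-b_ξ|²)^{1/2}`,
stated in `ℝ≥0∞` since the right-hand side may be infinite. -/
theorem stmt8 (γ : ℝ) (a b : ℤ → ℂ)
    (ha : Summable (fun ξ : ℤ => ‖a ξ‖ ^ 2)) (hb : Summable (fun ξ : ℤ => ‖b ξ‖ ^ 2)) :
    (∑' ξ : ℤ, if ξ ≠ 0 then
        ENNReal.ofReal ((1 + |(ξ : ℝ)|) ^ (2 * γ) * ‖a ξ‖ * ‖b ξ‖ *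
          (‖a ξ‖ ^ 2 - ‖b ξ‖ ^ 2) ^ 2)
      else 0) ^ ((1:ℝ)/2)
    ≤ ENNReal.ofReal
        (((∑' ξ : ℤ, ‖a ξ‖ ^ 2) ^ ((1:ℝ)/2)) ^ ((1:ℝ)/2)
          * ((∑' ξ : ℤ, ‖b ξ‖ ^ 2) ^ ((1:ℝ)/2)) ^ ((1:ℝ)/2)
          * ((∑' ξ : ℤ, ‖a ξ‖ ^ 2) ^ ((1:ℝ)/2) + (∑' ξ : ℤ, ‖b ξ‖ ^ 2) ^ ((1:ℝ)/2)))
      * (∑' ξ : ℤ, if ξ ≠ 0 then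
          ENNReal.ofReal ((1 + |(ξ : ℝ)|) ^ (2 * γ) * ‖a ξ - b ξ‖ ^ 2)
        else 0) ^ ((1:ℝ)/2) := by
  set A := (∑' ξ : ℤ, ‖a ξ‖ ^ 2) ^ ((1:ℝ)/2)
  set B := (∑' ξ : ℤ, ‖b ξ‖ ^ 2) ^ ((1:ℝ)/2)
  have hA : 0 ≤ A := by positivity
  have hB : 0 ≤ B := by positivity
  have hC : (A ^ ((1:ℝ)/2) * B ^ ((1:ℝ)/2) * (A + B)) ^ 2 = A * B * (A + B) ^ 2 := by
    simp only [mul_pow, ← Real.sqrt_eq_rpow, Real.sq_sqrt hA, Real.sq_sqrt hB]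
  refine ENNReal.tsum_rpow_half_le_of_le_sq_mul (by positivity) fun ξ => ?_
  split_ifs
  · rw [← ENNReal.ofReal_mul (sq_nonneg _), hC]
    refine ENNReal.ofReal_le_ofReal ?_
    have hpoint := norm_mul_norm_mul_sq_sub_sq_le
      (norm_le_tsum_norm_sq_rpow_half ha ξ) (norm_le_tsum_norm_sq_rpow_half hb ξ)
    calc (1 + |(ξ : ℝ)|) ^ (2 * γ) * ‖a ξ‖ * ‖b ξ‖ * (‖a ξ‖ ^ 2 - ‖b ξ‖ ^ 2) ^ 2
        = (1 + |(ξ : ℝ)|) ^ (2 * γ) * (‖a ξ‖ * ‖b ξ‖ * (‖a ξ‖ ^ 2 - ‖b ξ‖ ^ 2) ^ 2) := by ring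
      _ ≤ (1 + |(ξ : ℝ)|) ^ (2 * γ) * (A * B * (A + B) ^ 2 * ‖a ξ - b ξ‖ ^ 2) := by gcongr
      _ = A * B * (A + B) ^ 2 * ((1 + |(ξ : ℝ)|) ^ (2 * γ) * ‖a ξ - b ξ‖ ^ 2) := by ring
  · simp
end

section
/- Let ξ₁, ξ₂, ξ₃ ∈ ℤ with ξ := ξ₁ + ξ₂ + ξ₃, suppose (ξ₁ + ξ₂)(ξ₂ + ξ₃)(ξ₃ + ξ₁) ≠ 0, and suppose 4|ξ₃| ≤ |ξ|. Then |ξ₁ + ξ₂| · |ξ₂ + ξ₃| · |ξ₃ + ξ₁| ≥ (9/32) ξ². -/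
/-!
Write `s = ξ₁ + ξ₂ + ξ₃`. Since `ξ₁ + ξ₂ = s - ξ₃` and `(ξ₂ + ξ₃) + (ξ₃ + ξ₁) = s + ξ₃`, smallness of
`ξ₃` gives `|ξ₁ + ξ₂| ≥ 3|s|/4` and `|ξ₂ + ξ₃| + |ξ₃ + ξ₁| ≥ 3|s|/4`. For nonzero integers
`x, y` one has `|x| |y| ≥ (|x| + |y|)/2`, so the product of the three factors is at least
`(3|s|/4) (3|s|/8) = (9/32) s²`.
-/

section

variable {α : Type*}

lemma add_le_two_mul_mul_of_one_le [CommRing α] [LinearOrder α] [IsStrictOrderedRing α]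
    {x y : α} (hx : 1 ≤ x) (hy : 1 ≤ y) : x + y ≤ 2 * (x * y) := by
  nlinarith [mul_nonneg (sub_nonneg.2 hx) (sub_nonneg.2 hy)]

lemma three_mul_abs_le_four_mul_abs_add [CommRing α] [LinearOrder α] [IsStrictOrderedRing α]
    {s d : α} (h : 4 * |d| ≤ |s|) : 3 * |s| ≤ 4 * |s + d| := by
  have := abs_add_le (s + d) (-d)
  rw [add_neg_cancel_right, abs_neg] at this
  linarith

lemma resonance_lower_bound [Field α] [LinearOrder α] [IsStrictOrderedRing α] {ξ₁ ξ₂ ξ₃ : α}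
    (hb : 1 ≤ |ξ₂ + ξ₃|) (hc : 1 ≤ |ξ₃ + ξ₁|) (hsmall : 4 * |ξ₃| ≤ |ξ₁ + ξ₂ + ξ₃|) :
    9 / 32 * (ξ₁ + ξ₂ + ξ₃) ^ 2 ≤ |ξ₁ + ξ₂| * |ξ₂ + ξ₃| * |ξ₃ + ξ₁| := by
  set s := ξ₁ + ξ₂ + ξ₃
  have ha : 3 / 4 * |s| ≤ |ξ₁ + ξ₂| := by
    have := three_mul_abs_le_four_mul_abs_add (s := s) (d := -ξ₃) (by rwa [abs_neg])
    rw [show s + -ξ₃ = ξ₁ + ξ₂ by ring] at this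
    linarith
  have hbc : 3 / 8 * |s| ≤ |ξ₂ + ξ₃| * |ξ₃ + ξ₁| := by
    have := three_mul_abs_le_four_mul_abs_add hsmall
    have := abs_add_le (ξ₂ + ξ₃) (ξ₃ + ξ₁)
    rw [show ξ₂ + ξ₃ + (ξ₃ + ξ₁) = s + ξ₃ by ring] at this
    linarith [add_le_two_mul_mul_of_one_le hb hc]
  calc 9 / 32 * s ^ 2 = 3 / 4 * |s| * (3 / 8 * |s|) := by rw [← sq_abs]; ring
    _ ≤ |ξ₁ + ξ₂| * (|ξ₂ + ξ₃| * |ξ₃ + ξ₁|) := by gcongr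
    _ = |ξ₁ + ξ₂| * |ξ₂ + ξ₃| * |ξ₃ + ξ₁| := (mul_assoc ..).symm

end

/-- Lower bound on the resonance factor used in Case 2 of the proof of Lemma 3.2:
if the three pairwise sums are nonzero and `4|ξ₃| ≤ |ξ|` where `ξ = ξ₁+ξ₂+ξ₃`, then
`|ξ₁+ξ₂| |ξ₂+ξ₃| |ξ₃+ξ₁| ≥ (9/32) ξ²`. -/
theorem stmt13 (ξ₁ ξ₂ ξ₃ : ℤ) (h : (ξ₁ + ξ₂) * (ξ₂ + ξ₃) * (ξ₃ + ξ₁) ≠ 0)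
    (hsmall : 4 * |ξ₃| ≤ |ξ₁ + ξ₂ + ξ₃|) :
    (9/32 : ℝ) * ((ξ₁ + ξ₂ + ξ₃ : ℤ) : ℝ) ^ 2
      ≤ |((ξ₁ + ξ₂ : ℤ) : ℝ)| * |((ξ₂ + ξ₃ : ℤ) : ℝ)| * |((ξ₃ + ξ₁ : ℤ) : ℝ)| := by
  have hb : (1 : ℝ) ≤ |((ξ₂ + ξ₃ : ℤ) : ℝ)| := by
    exact_mod_cast Int.one_le_abs (right_ne_zero_of_mul (left_ne_zero_of_mul h))
  have hc : (1 : ℝ) ≤ |((ξ₃ + ξ₁ : ℤ) : ℝ)| := by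
    exact_mod_cast Int.one_le_abs (right_ne_zero_of_mul h)
  push_cast at hb hc ⊢
  exact resonance_lower_bound hb hc (by exact_mod_cast hsmall)
end

section
/- Let 0 ≤ s < 1/2 and 0 < δ ≤ (1/2 − s)/5. There exists a constant C = C(s, δ) such that for all integers ξ₁, ξ₂, ξ₃ with ξ := ξ₁ + ξ₂ + ξ₃, ξ₃ ≠ 0, and (ξ₁ + ξ₂)(ξ₂ + ξ₃)(ξ₃ + ξ₁) ≠ 0, ⟨ξ₁⟩^{s+δ} ⟨ξ₂⟩^{s+δ} ⟨ξ₃⟩^{s+δ} ⟨ξ⟩^{1/2−s} ≤ C |ξ₃| · ( |ξ₁ + ξ₂| · |ξ₂ + ξ₃| · |ξ₃ + ξ₁| )^{1/2−δ}. -/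
/-!
Write `a = ξ₁ + ξ₂`, `b = ξ₂ + ξ₃`, `c = ξ₃ + ξ₁`, `t = |ξ₃|` and `S = |a| + |b| + |c|`.
Since `2ξ₁ = a - b + c`, `2ξ₂ = a + b - c` and `2ξ = a + b + c`, every bracket other than `⟨ξ₃⟩`
is at most `S`, while `⟨ξ₃⟩ ≤ 36 t`. Since `a = b + c - 2ξ₃` and `|a|, |b|, |c|, t ≥ 1`, we get
`|a| ≤ 4 t |b| |c|`, and symmetrically for `b` and `c`, so `S² ≤ 36 t |abc|`. Hence the left side is
at most `(36 t)^(s+δ) S^(2(1/2-δ)) ≤ (36 t)^(s+1/2) |abc|^(1/2-δ) ≤ 36 t |abc|^(1/2-δ)`; the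
exponents fit because `s + 4δ ≤ 1/2` and `s + 1/2 ≤ 1`.
-/

open Real

lemma le_four_mul_mul_mul_of_le_add {a b c t : ℝ} (hb : 1 ≤ b) (hc : 1 ≤ c) (ht : 1 ≤ t)
    (h : a ≤ b + c + 2 * t) : a ≤ 4 * t * b * c := by
  have hbc : 1 ≤ b * c := one_le_mul_of_one_le_of_one_le hb hc
  nlinarith [mul_nonneg (sub_nonneg.2 hb) (sub_nonneg.2 hc),
    mul_nonneg (sub_nonneg.2 ht) (sub_nonneg.2 hbc)]

lemma sq_add_add_le_mul_mul_mul {a b c t : ℝ} (ha : 1 ≤ a) (hb : 1 ≤ b) (hc : 1 ≤ c)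
    (ht : 1 ≤ t) (hab : a ≤ b + c + 2 * t) (hbc : b ≤ c + a + 2 * t) (hca : c ≤ a + b + 2 * t) :
    (a + b + c) ^ 2 ≤ 36 * t * (a * b * c) := by
  have hA : a * a ≤ a * (4 * t * b * c) :=
    mul_le_mul_of_nonneg_left (le_four_mul_mul_mul_of_le_add hb hc ht hab) (by linarith)
  have hB : b * b ≤ b * (4 * t * c * a) :=
    mul_le_mul_of_nonneg_left (le_four_mul_mul_mul_of_le_add hc ha ht hbc) (by linarith)
  have hC : c * c ≤ c * (4 * t * a * b) :=
    mul_le_mul_of_nonneg_left (le_four_mul_mul_mul_of_le_add ha hb ht hca) (by linarith)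
  nlinarith [sq_nonneg (a - b), sq_nonneg (b - c), sq_nonneg (c - a)]

lemma rpow_mul_le_of_sq_le {α β γ S u P y₁ y₂ y₃ y : ℝ} (hα : 0 ≤ α) (hβ : 0 ≤ β) (hγ : 0 ≤ γ)
    (hαβγ : 2 * α + β ≤ 2 * γ) (hαγ : α + γ ≤ 1) (hS : 1 ≤ S) (hu : 1 ≤ u) (hSP : S ^ 2 ≤ u * P)
    (hy₁ : 0 ≤ y₁) (hy₁S : y₁ ≤ S) (hy₂ : 0 ≤ y₂) (hy₂S : y₂ ≤ S) (hy₃ : 0 ≤ y₃) (hy₃u : y₃ ≤ u)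
    (hy : 0 ≤ y) (hyS : y ≤ S) :
    y₁ ^ α * y₂ ^ α * y₃ ^ α * y ^ β ≤ u * P ^ γ := by
  have hS0 : 0 < S := by linarith
  have hu0 : 0 < u := by linarith
  have hP : 0 ≤ P := nonneg_of_mul_nonneg_right (by nlinarith) hu0
  calc y₁ ^ α * y₂ ^ α * y₃ ^ α * y ^ β ≤ S ^ α * S ^ α * u ^ α * S ^ β := by
        gcongr
    _ = u ^ α * S ^ (2 * α + β) := by rw [rpow_add hS0, two_mul, rpow_add hS0]; ring
    _ ≤ u ^ α * S ^ (2 * γ) := by gcongr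
    _ = u ^ α * (S ^ 2) ^ γ := by rw [rpow_mul hS0.le, rpow_two]
    _ ≤ u ^ α * (u * P) ^ γ := by gcongr
    _ = u ^ (α + γ) * P ^ γ := by rw [mul_rpow hu0.le hP, rpow_add hu0]; ring
    _ ≤ u * P ^ γ := by
        gcongr
        simpa using rpow_le_rpow_of_exponent_le hu hαγ

theorem one_add_abs_rpow_mul_le_resonance {α β γ x₁ x₂ x₃ : ℝ} (hα : 0 ≤ α) (hβ : 0 ≤ β)
    (hγ : 0 ≤ γ) (hαβγ : 2 * α + β ≤ 2 * γ) (hαγ : α + γ ≤ 1) (h₃ : 1 ≤ |x₃|)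
    (h₁₂ : 1 ≤ |x₁ + x₂|) (h₂₃ : 1 ≤ |x₂ + x₃|) (h₃₁ : 1 ≤ |x₃ + x₁|) :
    (1 + |x₁|) ^ α * (1 + |x₂|) ^ α * (1 + |x₃|) ^ α * (1 + |x₁ + x₂ + x₃|) ^ β
      ≤ 36 * |x₃| * (|x₁ + x₂| * |x₂ + x₃| * |x₃ + x₁|) ^ γ := by
  have hS := sq_add_add_le_mul_mul_mul h₁₂ h₂₃ h₃₁ h₃ (by grind) (by grind) (by grind)
  exact rpow_mul_le_of_sq_le hα hβ hγ hαβγ hαγ (by linarith) (by linarith) hS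
    (by positivity) (by grind) (by positivity) (by grind) (by positivity) (by linarith)
    (by positivity) (by grind)

theorem stmt14_general (s δ : ℝ) (hs0 : 0 ≤ s) (hδ0 : 0 < δ)
    (hδ : δ ≤ (1/2 - s)/5) :
    ∃ C : ℝ, 0 < C ∧ ∀ ξ₁ ξ₂ ξ₃ : ℤ, ξ₃ ≠ 0 →
      (ξ₁ + ξ₂) * (ξ₂ + ξ₃) * (ξ₃ + ξ₁) ≠ 0 →
      (1 + |(ξ₁ : ℝ)|) ^ (s + δ) * (1 + |(ξ₂ : ℝ)|) ^ (s + δ) * (1 + |(ξ₃ : ℝ)|) ^ (s + δ) *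
          (1 + |((ξ₁ + ξ₂ + ξ₃ : ℤ) : ℝ)|) ^ (1/2 - s)
        ≤ C * |(ξ₃ : ℝ)| *
          (|((ξ₁ + ξ₂ : ℤ) : ℝ)| * |((ξ₂ + ξ₃ : ℤ) : ℝ)| * |((ξ₃ + ξ₁ : ℤ) : ℝ)|) ^ (1/2 - δ) := by
  refine ⟨36, by norm_num, fun ξ₁ ξ₂ ξ₃ h₃ h => ?_⟩
  obtain ⟨⟨h₁₂, h₂₃⟩, h₃₁⟩ := And.imp_left mul_ne_zero_iff.1 (mul_ne_zero_iff.1 h)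
  push_cast
  refine one_add_abs_rpow_mul_le_resonance (by linarith) (by linarith) (by linarith)
    (by linarith) (by linarith) ?_ ?_ ?_ ?_ <;> exact_mod_cast Int.one_le_abs ‹_›

/-- Finiteness of the multiplier supremum `M'` at the heart of the proof of Lemma 3.2:
for `0 ≤ s < 1/2` and `0 < δ ≤ (1/2-s)/5`,
`⟨ξ₁⟩^{s+δ} ⟨ξ₂⟩^{s+δ} ⟨ξ₃⟩^{s+δ} ⟨ξ⟩^{1/2-s}
  ≲ |ξ₃| (|ξ₁+ξ₂| |ξ₂+ξ₃| |ξ₃+ξ₁|)^{1/2-δ}` where `ξ = ξ₁+ξ₂+ξ₃`. -/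
theorem stmt14 (s δ : ℝ) (hs0 : 0 ≤ s) (hs : s < 1/2) (hδ0 : 0 < δ)
    (hδ : δ ≤ (1/2 - s)/5) :
    ∃ C : ℝ, 0 < C ∧ ∀ ξ₁ ξ₂ ξ₃ : ℤ, ξ₃ ≠ 0 →
      (ξ₁ + ξ₂) * (ξ₂ + ξ₃) * (ξ₃ + ξ₁) ≠ 0 →
      (1 + |(ξ₁ : ℝ)|) ^ (s + δ) * (1 + |(ξ₂ : ℝ)|) ^ (s + δ) * (1 + |(ξ₃ : ℝ)|) ^ (s + δ) *
          (1 + |((ξ₁ + ξ₂ + ξ₃ : ℤ) : ℝ)|) ^ (1/2 - s)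
        ≤ C * |(ξ₃ : ℝ)| *
          (|((ξ₁ + ξ₂ : ℤ) : ℝ)| * |((ξ₂ + ξ₃ : ℤ) : ℝ)| * |((ξ₃ + ξ₁ : ℤ) : ℝ)|) ^ (1/2 - δ) :=
  stmt14_general s δ hs0 hδ0 hδ
end

section
/- Let 0 ≤ s ≤ 1/2, T > 0, H ≥ 0, let a : ℤ → ℂ be a bounded sequence, and let b : [0, T] → (ℤ → ℂ) be measurable with Σ_{ξ≠0} ⟨ξ⟩² |b_ξ(t)|² ≤ H² for every t ∈ [0, T]. Then ( ∫₀^T Σ_{ξ∈ℤ, ξ≠0} (⟨ξ⟩^{4s+1} / ξ²) |a_ξ|² |b_ξ(t)|⁴ dt )^{1/2} ≤ 2 T^{1/2} ‖a‖_{ℓ^∞} H². -/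
/-!
Termwise, `⟨ξ⟩^{4s+1}/ξ² ≤ ⟨ξ⟩³/ξ² ≤ 2⟨ξ⟩²` for `ξ ≠ 0`, and `|b_ξ|² ≤ ⟨ξ⟩²|b_ξ|² ≤ H²`, so the
`ξ`-th summand is at most `2‖a‖²_{ℓ^∞} H² · ⟨ξ⟩²|b_ξ(t)|²`. Summing gives the uniform-in-time
bound `2‖a‖²_{ℓ^∞} H⁴ ≤ (2‖a‖_{ℓ^∞} H²)²`, and integrating over `[0, T]` costs the factor `T`.
-/

open MeasureTheory

lemma one_add_abs_rpow_div_sq_le {x p : ℝ} (hx : 1 ≤ |x|) (hp : p ≤ 3) :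
    (1 + |x|) ^ p / x ^ 2 ≤ 2 * (1 + |x|) ^ 2 := by
  have hbase : 1 ≤ 1 + |x| := by linarith
  have hcube : (1 + |x|) ^ p ≤ (1 + |x|) ^ 3 := by
    simpa using Real.rpow_le_rpow_of_exponent_le hbase (show p ≤ ((3 : ℕ) : ℝ) by simpa)
  have hlin : 1 + |x| ≤ 2 * x ^ 2 := by nlinarith [sq_abs x]
  rw [div_le_iff₀ (by nlinarith [sq_abs x])]
  calc (1 + |x|) ^ p ≤ (1 + |x|) ^ 2 * (1 + |x|) := by simpa [pow_succ] using hcube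
    _ ≤ (1 + |x|) ^ 2 * (2 * x ^ 2) := by gcongr
    _ = 2 * (1 + |x|) ^ 2 * x ^ 2 := by ring

lemma one_add_abs_rpow_div_sq_mul_le {x p α β M H : ℝ} (hx : 1 ≤ |x|) (hp : p ≤ 3)
    (hα : 0 ≤ α) (hαM : α ≤ M) (hβH : (1 + |x|) ^ 2 * β ^ 2 ≤ H ^ 2) :
    (1 + |x|) ^ p / x ^ 2 * α ^ 2 * β ^ 4
      ≤ 2 * M ^ 2 * H ^ 2 * ((1 + |x|) ^ 2 * β ^ 2) := by
  have hβ : β ^ 2 ≤ H ^ 2 :=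
    le_trans (le_mul_of_one_le_left (sq_nonneg β) (one_le_pow₀ (by linarith))) hβH
  calc (1 + |x|) ^ p / x ^ 2 * α ^ 2 * β ^ 4
      ≤ 2 * (1 + |x|) ^ 2 * M ^ 2 * β ^ 4 := by
        gcongr
        exact one_add_abs_rpow_div_sq_le hx hp
    _ = 2 * M ^ 2 * β ^ 2 * ((1 + |x|) ^ 2 * β ^ 2) := by ring
    _ ≤ 2 * M ^ 2 * H ^ 2 * ((1 + |x|) ^ 2 * β ^ 2) := by gcongr

lemma tsum_weighted_quartic_le {s M H : ℝ} (hs : s ≤ 1 / 2) (a c : ℤ → ℂ)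
    (hM : ∀ ξ, ‖a ξ‖ ≤ M)
    (hc : (∑' ξ : ℤ, if ξ ≠ 0 then ENNReal.ofReal ((1 + |(ξ : ℝ)|) ^ 2 * ‖c ξ‖ ^ 2) else 0)
      ≤ ENNReal.ofReal (H ^ 2)) :
    (∑' ξ : ℤ, if ξ ≠ 0 then
        ENNReal.ofReal ((1 + |(ξ : ℝ)|) ^ (4 * s + 1) / (ξ : ℝ) ^ 2 * ‖a ξ‖ ^ 2 * ‖c ξ‖ ^ 4)
      else 0)
      ≤ ENNReal.ofReal (2 * M ^ 2 * H ^ 2) * ENNReal.ofReal (H ^ 2) := by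
  calc _ ≤ ∑' ξ : ℤ, ENNReal.ofReal (2 * M ^ 2 * H ^ 2) *
        (if ξ ≠ 0 then ENNReal.ofReal ((1 + |(ξ : ℝ)|) ^ 2 * ‖c ξ‖ ^ 2) else 0) := by
        refine ENNReal.tsum_le_tsum fun ξ => ?_
        split_ifs with hξ
        · have hcξ : (1 + |(ξ : ℝ)|) ^ 2 * ‖c ξ‖ ^ 2 ≤ H ^ 2 := by
            have := (ENNReal.le_tsum ξ).trans hc
            rwa [if_pos hξ, ENNReal.ofReal_le_ofReal_iff (sq_nonneg H)] at this
          have hξ1 : (1 : ℝ) ≤ |(ξ : ℝ)| := by exact_mod_cast Int.one_le_abs hξ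
          rw [← ENNReal.ofReal_mul (by positivity)]
          exact ENNReal.ofReal_le_ofReal <| one_add_abs_rpow_div_sq_mul_le hξ1 (by linarith)
            (norm_nonneg _) (hM ξ) hcξ
        · simp
    _ = ENNReal.ofReal (2 * M ^ 2 * H ^ 2) * ∑' ξ : ℤ,
        (if ξ ≠ 0 then ENNReal.ofReal ((1 + |(ξ : ℝ)|) ^ 2 * ‖c ξ‖ ^ 2) else 0) :=
        ENNReal.tsum_mul_left
    _ ≤ _ := by gcongr

lemma setLIntegral_rpow_half_le {α : Type*} [MeasurableSpace α] (μ : Measure α) (S : Set α)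
    {F : α → ENNReal} {K : ENNReal} (hF : ∀ t ∈ S, F t ≤ K ^ 2) :
    (∫⁻ t in S, F t ∂μ) ^ ((1 : ℝ) / 2) ≤ μ S ^ ((1 : ℝ) / 2) * K := by
  have hint : ∫⁻ t in S, F t ∂μ ≤ K ^ 2 * μ S :=
    (setLIntegral_mono_ae measurable_const.aemeasurable (ae_of_all _ hF)).trans
      (setLIntegral_const S _).le
  calc (∫⁻ t in S, F t ∂μ) ^ ((1 : ℝ) / 2) ≤ (K ^ 2 * μ S) ^ ((1 : ℝ) / 2) :=
        ENNReal.rpow_le_rpow hint (by norm_num)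
    _ = μ S ^ ((1 : ℝ) / 2) * K := by
        rw [ENNReal.mul_rpow_of_nonneg _ _ (by norm_num), ← ENNReal.rpow_natCast,
          ← ENNReal.rpow_mul, mul_comm]
        norm_num

theorem stmt16_general (s T H : ℝ) (hs : s ≤ 1/2) (hT : 0 < T)
    (a : ℤ → ℂ) (ha : BddAbove (Set.range fun ξ : ℤ => ‖a ξ‖))
    (b : ℝ → ℤ → ℂ)
    (hbound : ∀ t ∈ Set.Icc (0:ℝ) T,
      (∑' ξ : ℤ, if ξ ≠ 0 then
          ENNReal.ofReal ((1 + |(ξ : ℝ)|) ^ 2 * ‖b t ξ‖ ^ 2) else 0)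
        ≤ ENNReal.ofReal (H ^ 2)) :
    (∫⁻ t in Set.Icc (0:ℝ) T, ∑' ξ : ℤ, if ξ ≠ 0 then
        ENNReal.ofReal ((1 + |(ξ : ℝ)|) ^ (4 * s + 1) / (ξ : ℝ) ^ 2 * ‖a ξ‖ ^ 2 * ‖b t ξ‖ ^ 4)
      else 0) ^ ((1:ℝ)/2)
    ≤ ENNReal.ofReal (2 * T ^ ((1:ℝ)/2) * (⨆ ξ : ℤ, ‖a ξ‖) * H ^ 2) := by
  set M : ℝ := ⨆ ξ : ℤ, ‖a ξ‖
  have hMle : ∀ ξ : ℤ, ‖a ξ‖ ≤ M := le_ciSup ha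
  have hM0 : 0 ≤ M := (norm_nonneg (a 0)).trans (hMle 0)
  have hpointwise : ∀ t ∈ Set.Icc (0:ℝ) T, (∑' ξ : ℤ, if ξ ≠ 0 then
      ENNReal.ofReal ((1 + |(ξ : ℝ)|) ^ (4 * s + 1) / (ξ : ℝ) ^ 2 * ‖a ξ‖ ^ 2 * ‖b t ξ‖ ^ 4)
      else 0) ≤ ENNReal.ofReal (2 * M * H ^ 2) ^ 2 := fun t ht => by
    refine (tsum_weighted_quartic_le hs a (b t) hMle (hbound t ht)).trans ?_
    rw [← ENNReal.ofReal_mul (by positivity), ← ENNReal.ofReal_pow (by positivity)]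
    exact ENNReal.ofReal_le_ofReal (by nlinarith [sq_nonneg M, sq_nonneg H])
  calc _ ≤ volume (Set.Icc (0:ℝ) T) ^ ((1:ℝ)/2) * ENNReal.ofReal (2 * M * H ^ 2) :=
        setLIntegral_rpow_half_le volume _ hpointwise
    _ = ENNReal.ofReal (2 * T ^ ((1:ℝ)/2) * M * H ^ 2) := by
        rw [Real.volume_Icc, sub_zero, ENNReal.ofReal_rpow_of_nonneg hT.le (by norm_num),
          ← ENNReal.ofReal_mul (by positivity)]
        ring_nf

/-- Fourier-coefficient form of the second estimate of Lemma 3.3: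
`(∫₀^T Σ_{ξ≠0} ⟨ξ⟩^{4s+1}/ξ² |a_ξ|² |b_ξ(t)|⁴ dt)^{1/2} ≤ 2 T^{1/2} ‖a‖_{ℓ∞} H²`,
when `Σ_{ξ≠0} ⟨ξ⟩² |b_ξ(t)|² ≤ H²` for every `t ∈ [0,T]`. -/
theorem stmt16 (s T H : ℝ) (hs0 : 0 ≤ s) (hs : s ≤ 1/2) (hT : 0 < T) (hH : 0 ≤ H)
    (a : ℤ → ℂ) (ha : BddAbove (Set.range fun ξ : ℤ => ‖a ξ‖))
    (b : ℝ → ℤ → ℂ) (hb : ∀ ξ : ℤ, Measurable (fun t => b t ξ))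
    (hbound : ∀ t ∈ Set.Icc (0:ℝ) T,
      (∑' ξ : ℤ, if ξ ≠ 0 then
          ENNReal.ofReal ((1 + |(ξ : ℝ)|) ^ 2 * ‖b t ξ‖ ^ 2) else 0)
        ≤ ENNReal.ofReal (H ^ 2)) :
    (∫⁻ t in Set.Icc (0:ℝ) T, ∑' ξ : ℤ, if ξ ≠ 0 then
        ENNReal.ofReal ((1 + |(ξ : ℝ)|) ^ (4 * s + 1) / (ξ : ℝ) ^ 2 * ‖a ξ‖ ^ 2 * ‖b t ξ‖ ^ 4)
      else 0) ^ ((1:ℝ)/2)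
    ≤ ENNReal.ofReal (2 * T ^ ((1:ℝ)/2) * (⨆ ξ : ℤ, ‖a ξ‖) * H ^ 2) :=
  stmt16_general s T H hs hT a ha b hbound
end

section
/- Let η : ℝ → ℂ be a Schwartz function and let −1/2 < b′ ≤ b < 1/2. There exists a constant C = C(η, b, b′) such that for every T ∈ (0, 1) and every measurable g : ℝ → ℂ with ∫_ℝ (1 + |τ|)^{2b} |g(τ)|² dτ < ∞, ( ∫_ℝ (1 + |τ|)^{2b′} | ∫_ℝ T η̂(T(τ − σ)) g(σ) dσ |² dτ )^{1/2} ≤ C T^{b − b′} ( ∫_ℝ (1 + |τ|)^{2b} |g(τ)|² dτ )^{1/2}, where η̂(τ) := ∫_ℝ η(t) e^{−itτ} dt, so that τ ↦ T η̂(Tτ) is the Fourier transform of t ↦ η(t/T). -/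
/-!
Since `η` is a Schwartz function, `|T η̂(T u)| ≤ C T (1 + T|u|)⁻³`, so it suffices to bound the
positive convolution operator with kernel `T (1 + T|τ - σ|)⁻³` from `L²((1+|σ|)^{2b} dσ)` to
`L²((1+|τ|)^{2b'} dτ)`. This is a Schur test with the weight `(1+|τ|)^θ`, `θ = min b' (-b)`;
both of its conditions reduce to the convolution estimate
`∫ T (1 + T|τ-σ|)⁻³ (1+|σ|)^{-a} dσ ≲ T^δ (1+|τ|)^{δ-a}` for `0 ≤ δ ≤ a < 1`. That estimate
interpolates between the bound `T^a` (rescale `σ = u / T`, so that the singularity `|u|^{-a}` is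
integrable near `0`) and the bound `(1+|τ|)^{-a} + T^a / (1 + T(1+|τ|))` (split the `σ`-line at
`|τ - σ| = (1+|τ|)/2`).
-/

open MeasureTheory
open scoped ENNReal FourierTransform SchwartzMap

namespace TimeLocalization

lemma sq_lintegral_mul_le {α : Type*} [MeasurableSpace α] {μ : Measure α} {k f p : α → ℝ≥0∞}
    (hk : Measurable k) (hf : AEMeasurable f μ) (hp : Measurable p)
    (hp0 : ∀ y, p y ≠ 0) (hpt : ∀ y, p y ≠ ∞) :
    (∫⁻ y, k y * f y ∂μ) ^ 2 ≤ (∫⁻ y, k y * p y ∂μ) * ∫⁻ y, k y * (f y ^ 2 / p y) ∂μ := by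
  have hsplit : ∀ y, k y * f y
      = (k y * p y) ^ (1 / 2 : ℝ) * (k y * (f y ^ 2 / p y)) ^ (1 / 2 : ℝ) := by
    intro y
    rw [← ENNReal.mul_rpow_of_nonneg _ _ (by norm_num), mul_mul_mul_comm,
      ENNReal.mul_div_cancel (hp0 y) (hpt y), ← sq, ← mul_pow, ← ENNReal.rpow_natCast,
      ← ENNReal.rpow_mul]
    norm_num
  have hCS := ENNReal.lintegral_mul_norm_pow_le (μ := μ) (hk.mul hp).aemeasurable
    (hk.aemeasurable.mul ((hf.pow_const 2).div hp.aemeasurable)) (p := 1 / 2) (q := 1 / 2)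
    (by norm_num) (by norm_num) (by norm_num)
  rw [lintegral_congr hsplit]
  calc _ ≤ ((∫⁻ y, k y * p y ∂μ) ^ (1 / 2 : ℝ) *
          (∫⁻ y, k y * (f y ^ 2 / p y) ∂μ) ^ (1 / 2 : ℝ)) ^ 2 := pow_le_pow_left' hCS 2
    _ = _ := by
        rw [mul_pow, ← ENNReal.rpow_natCast, ← ENNReal.rpow_natCast, ← ENNReal.rpow_mul,
          ← ENNReal.rpow_mul]
        norm_num

theorem lintegral_sq_lintegral_mul_le_of_schur {α β : Type*} [MeasurableSpace α]
    [MeasurableSpace β] {μ : Measure α} {ν : Measure β} [SFinite μ] [SFinite ν]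
    {k : α → β → ℝ≥0∞} (hk : Measurable (Function.uncurry k)) {p : β → ℝ≥0∞} {q : α → ℝ≥0∞}
    (hp : Measurable p) (hq : Measurable q) (hp0 : ∀ y, p y ≠ 0) (hpt : ∀ y, p y ≠ ∞)
    {A B : ℝ≥0∞} (hrow : ∀ x, ∫⁻ y, k x y * p y ∂ν ≤ A * q x)
    (hcol : ∀ y, ∫⁻ x, k x y * q x ∂μ ≤ B * p y) {f : β → ℝ≥0∞} (hf : AEMeasurable f ν) :
    ∫⁻ x, (∫⁻ y, k x y * f y ∂ν) ^ 2 ∂μ ≤ A * B * ∫⁻ y, f y ^ 2 ∂ν := by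
  set h : β → ℝ≥0∞ := fun y => f y ^ 2 / p y
  have hh : AEMeasurable h ν := (hf.pow_const 2).div hp.aemeasurable
  have hkh : AEMeasurable (fun z : α × β => k z.1 z.2 * h z.2) (μ.prod ν) :=
    hk.aemeasurable.mul hh.comp_snd
  calc ∫⁻ x, (∫⁻ y, k x y * f y ∂ν) ^ 2 ∂μ
      ≤ ∫⁻ x, A * (q x * ∫⁻ y, k x y * h y ∂ν) ∂μ := lintegral_mono fun x =>
        (sq_lintegral_mul_le hk.of_uncurry_left hf hp hp0 hpt).trans <| by
          rw [← mul_assoc]; exact mul_le_mul_left (hrow x) _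
    _ = A * ∫⁻ y, h y * ∫⁻ x, k x y * q x ∂μ ∂ν := by
        rw [lintegral_const_mul'' A (f := fun x => q x * ∫⁻ y, k x y * h y ∂ν)
          (hq.aemeasurable.mul hkh.lintegral_prod_right')]
        congr 1
        have hpull : ∀ x, q x * ∫⁻ y, k x y * h y ∂ν = ∫⁻ y, q x * (k x y * h y) ∂ν :=
          fun x => (lintegral_const_mul'' _ (hk.of_uncurry_left.aemeasurable.mul hh)).symm
        simp_rw [hpull]
        rw [lintegral_lintegral_swap ((hq.aemeasurable.comp_fst).mul hkh)]
        congr 1 with y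
        rw [← lintegral_const_mul (h y) (f := fun x => k x y * q x) (hk.of_uncurry_right.mul hq)]
        congr 1 with x
        ring
    _ ≤ A * ∫⁻ y, B * f y ^ 2 ∂ν := by
        refine mul_le_mul_right (lintegral_mono fun y => ?_) A
        calc h y * ∫⁻ x, k x y * q x ∂μ ≤ h y * (B * p y) := mul_le_mul_right (hcol y) _
          _ = B * f y ^ 2 := by
            rw [mul_left_comm, ENNReal.div_mul_cancel (hp0 y) (hpt y)]
    _ = A * B * ∫⁻ y, f y ^ 2 ∂ν := by
        rw [lintegral_const_mul'' _ (hf.pow_const 2), mul_assoc]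

noncomputable def weight (r x : ℝ) : ℝ≥0∞ := ENNReal.ofReal ((1 + |x|) ^ r)

noncomputable def bump (n : ℕ) (T u : ℝ) : ℝ≥0∞ := ENNReal.ofReal (T / (1 + T * |u|) ^ n)

lemma weight_mul (r s x : ℝ) : weight r x * weight s x = weight (r + s) x := by
  rw [weight, weight, weight, ← ENNReal.ofReal_mul (by positivity),
    Real.rpow_add (by positivity)]

lemma weight_zero (x : ℝ) : weight 0 x = 1 := by simp [weight]

lemma weight_ne_zero (r x : ℝ) : weight r x ≠ 0 := by
  rw [weight, ne_eq, ENNReal.ofReal_eq_zero, not_le]; positivity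

lemma weight_ne_top (r x : ℝ) : weight r x ≠ ∞ := ENNReal.ofReal_ne_top

@[fun_prop]
lemma measurable_weight (r : ℝ) : Measurable (weight r) := by
  unfold weight; fun_prop

@[fun_prop]
lemma measurable_bump (n : ℕ) (T : ℝ) : Measurable (bump n T) := by
  unfold bump; fun_prop

lemma bump_comm (n : ℕ) (T τ σ : ℝ) : bump n T (τ - σ) = bump n T (σ - τ) := by
  rw [bump, bump, abs_sub_comm]

lemma bump_le (n : ℕ) {T : ℝ} (hT : 0 ≤ T) (u : ℝ) : bump n T u ≤ ENNReal.ofReal T :=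
  ENNReal.ofReal_le_ofReal (div_le_self hT (one_le_pow₀ (by nlinarith [abs_nonneg u])))

lemma bump_eq_mul (n : ℕ) {T : ℝ} (hT : 0 ≤ T) (u : ℝ) :
    bump n T u = ENNReal.ofReal T * bump n 1 (T * u) := by
  rw [bump, bump, ← ENNReal.ofReal_mul hT, one_mul, abs_mul, abs_of_nonneg hT, mul_one_div]

lemma lintegral_ofReal_mul_comp_mul {f : ℝ → ℝ≥0∞} (hf : Measurable f) {T : ℝ} (hT : 0 < T) :
    ∫⁻ x, ENNReal.ofReal T * f (T * x) = ∫⁻ x, f x := by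
  rw [lintegral_const_mul _ (f := fun x => f (T * x)) (hf.comp (measurable_const_mul T)),
    ← lintegral_map hf (measurable_const_mul T), Real.map_volume_mul_left hT.ne',
    lintegral_smul_measure, smul_eq_mul, ← mul_assoc, ← ENNReal.ofReal_mul hT.le,
    abs_of_pos (inv_pos.2 hT), mul_inv_cancel₀ hT.ne', ENNReal.ofReal_one, one_mul]

lemma lintegral_bump_sub (n : ℕ) {T : ℝ} (hT : 0 < T) (τ : ℝ) :
    ∫⁻ σ, bump n T (τ - σ) = ∫⁻ u, bump n 1 u := by
  rw [lintegral_sub_left_eq_self (fun u => bump n T u) τ]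
  simp_rw [bump_eq_mul n hT.le]
  exact lintegral_ofReal_mul_comp_mul (measurable_bump n 1) hT

lemma lintegral_bump_one_lt_top {n : ℕ} (hn : 1 < n) : ∫⁻ u, bump n 1 u < ∞ := by
  have h := finite_integral_one_add_norm (E := ℝ) (μ := volume) (r := n) (by simpa using hn)
  convert h using 3 with u
  rw [bump, one_mul, Real.norm_eq_abs, Real.rpow_neg (by positivity), Real.rpow_natCast,
    one_div]

-- `σ ≠ 0` because `Real.rpow` takes the junk value `0 ^ (-a) = 0`.
lemma weight_neg_le {a T σ : ℝ} (ha : 0 ≤ a) (hT : 0 < T) (hσ : σ ≠ 0) :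
    weight (-a) σ ≤ ENNReal.ofReal (T ^ a) *
      ((Set.Icc (-1) 1).indicator (fun u => ENNReal.ofReal (|u| ^ (-a))) (T * σ) + 1) := by
  have hscale : (1 + |σ|) ^ (-a) ≤ T ^ a * |T * σ| ^ (-a) := by
    rw [abs_mul, abs_of_pos hT, Real.mul_rpow hT.le (abs_nonneg _), ← mul_assoc,
      ← Real.rpow_add hT, add_neg_cancel, Real.rpow_zero, one_mul]
    exact Real.rpow_le_rpow_of_nonpos (abs_pos.2 hσ) (by linarith) (by linarith)
  refine (ENNReal.ofReal_le_ofReal hscale).trans ?_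
  rw [ENNReal.ofReal_mul (by positivity)]
  gcongr
  by_cases hmem : T * σ ∈ Set.Icc (-1) 1
  · rw [Set.indicator_of_mem hmem]
    exact le_self_add
  · rw [Set.indicator_of_notMem hmem, zero_add, ENNReal.ofReal_le_one]
    refine Real.rpow_le_one_of_one_le_of_nonpos ?_ (by linarith)
    rw [Set.mem_Icc, not_and_or, not_le, not_le] at hmem
    rcases hmem with h | h
    · rw [abs_of_neg (by linarith)]; linarith
    · rw [abs_of_pos (by linarith)]; linarith

lemma lintegral_abs_rpow_neg_Icc_lt_top {a : ℝ} (ha : a < 1) :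
    ∫⁻ u in Set.Icc (-1) 1, ENNReal.ofReal (|u| ^ (-a)) < ∞ := by
  have hloc : LocallyIntegrable (fun u : ℝ => |u| ^ (-a)) :=
    locallyIntegrable_of_norm_le_rpow (C := 1) (α := a) (by simp) (by simpa using ha)
      (ae_of_all _ fun u => by
        rw [one_mul, Real.norm_eq_abs, Real.norm_eq_abs,
          abs_of_nonneg (Real.rpow_nonneg (abs_nonneg u) _)])
      (Measurable.pow_const (by fun_prop) _).aestronglyMeasurable
  exact (hloc.integrableOn_isCompact isCompact_Icc).lintegral_lt_top

lemma exists_lintegral_bump_mul_weight_le_rpow {n : ℕ} (hn : 1 < n) {a : ℝ} (ha0 : 0 ≤ a)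
    (ha1 : a < 1) :
    ∃ C : ℝ≥0∞, C ≠ ∞ ∧ ∀ T, 0 < T → ∀ τ,
      ∫⁻ σ, bump n T (τ - σ) * weight (-a) σ ≤ C * ENNReal.ofReal (T ^ a) := by
  set φ : ℝ → ℝ≥0∞ := (Set.Icc (-1) 1).indicator fun u => ENNReal.ofReal (|u| ^ (-a))
  have hφ : Measurable φ := (by fun_prop : Measurable _).indicator measurableSet_Icc
  refine ⟨(∫⁻ u, φ u) + ∫⁻ u, bump n 1 u,
    ENNReal.add_ne_top.2 ⟨?_, (lintegral_bump_one_lt_top hn).ne⟩, fun T hT τ => ?_⟩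
  · rw [lintegral_indicator measurableSet_Icc]
    exact (lintegral_abs_rpow_neg_Icc_lt_top ha1).ne
  calc ∫⁻ σ, bump n T (τ - σ) * weight (-a) σ
      ≤ ∫⁻ σ, ENNReal.ofReal (T ^ a) * (ENNReal.ofReal T * φ (T * σ) + bump n T (τ - σ)) := by
        refine lintegral_mono_ae ?_
        filter_upwards [Measure.ae_ne volume 0] with σ hσ
        calc bump n T (τ - σ) * weight (-a) σ
            ≤ bump n T (τ - σ) * (ENNReal.ofReal (T ^ a) * (φ (T * σ) + 1)) :=
              mul_le_mul_right (weight_neg_le ha0 hT hσ) _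
          _ = ENNReal.ofReal (T ^ a) * (bump n T (τ - σ) * φ (T * σ) + bump n T (τ - σ)) := by
              ring
          _ ≤ _ := by gcongr; exact bump_le n hT.le _
    _ = ((∫⁻ u, φ u) + ∫⁻ u, bump n 1 u) * ENNReal.ofReal (T ^ a) := by
        rw [lintegral_const_mul _ (by fun_prop), lintegral_add_left (by fun_prop),
          lintegral_ofReal_mul_comp_mul hφ hT, lintegral_bump_sub n hT, mul_comm]

lemma bump_three_mul_weight_le {a T : ℝ} (ha : 0 ≤ a) (hT : 0 < T) (τ σ : ℝ) :
    bump 3 T (τ - σ) * weight (-a) σ ≤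
      ENNReal.ofReal (2 ^ a) * weight (-a) τ * bump 3 T (τ - σ) +
        ENNReal.ofReal (2 / (1 + T * (1 + |τ|))) * (bump 2 T (τ - σ) * weight (-a) σ) := by
  by_cases hnear : |τ - σ| ≤ (1 + |τ|) / 2
  · refine le_add_right ?_
    rw [mul_comm, weight, weight, ← ENNReal.ofReal_mul (by positivity)]
    gcongr
    have hσ : (1 + |τ|) / 2 ≤ 1 + |σ| := by linarith [abs_sub_abs_le_abs_sub τ σ]
    calc (1 + |σ|) ^ (-a) ≤ ((1 + |τ|) / 2) ^ (-a) :=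
          Real.rpow_le_rpow_of_nonpos (by positivity) hσ (by linarith)
      _ = 2 ^ a * (1 + |τ|) ^ (-a) := by
          rw [Real.div_rpow (by positivity) zero_le_two, Real.rpow_neg zero_le_two,
            div_inv_eq_mul, mul_comm]
  · refine le_add_left ?_
    rw [← mul_assoc]
    gcongr
    rw [bump, bump, ← ENNReal.ofReal_mul (by positivity)]
    gcongr
    have hfar : 1 + T * (1 + |τ|) ≤ 2 * (1 + T * |τ - σ|) := by nlinarith
    rw [div_mul_div_comm, div_le_div_iff₀ (by positivity) (by positivity)]
    calc T * ((1 + T * (1 + |τ|)) * (1 + T * |τ - σ|) ^ 2)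
        ≤ T * (2 * (1 + T * |τ - σ|) * (1 + T * |τ - σ|) ^ 2) := by gcongr
      _ = 2 * T * (1 + T * |τ - σ|) ^ 3 := by ring

lemma rpow_mul_rpow_le_of_le_one {T x p q p' q' e : ℝ} (hT : 0 < T) (hx : 0 < x)
    (hp : p' = p + e) (hq : q' = q + e) (he : (T * x) ^ e ≤ 1) :
    T ^ p' * x ^ q' ≤ T ^ p * x ^ q := by
  rw [hp, hq, Real.rpow_add hT, Real.rpow_add hx, mul_mul_mul_comm, ← Real.mul_rpow hT.le hx.le]
  exact mul_le_of_le_one_right (by positivity) he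

lemma ofReal_rpow_mul_weight {T : ℝ} (hT : 0 ≤ T) (δ a τ : ℝ) :
    ENNReal.ofReal (T ^ δ) * weight (δ - a) τ = ENNReal.ofReal (T ^ δ * (1 + |τ|) ^ (δ - a)) := by
  rw [weight, ENNReal.ofReal_mul (by positivity)]

lemma ofReal_rpow_le_of_mul_le_one {T δ a τ : ℝ} (hT : 0 < T) (hδa : δ ≤ a)
    (hTτ : T * (1 + |τ|) ≤ 1) :
    ENNReal.ofReal (T ^ a) ≤ ENNReal.ofReal (T ^ δ) * weight (δ - a) τ := by
  rw [ofReal_rpow_mul_weight hT.le]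
  gcongr
  simpa using rpow_mul_rpow_le_of_le_one (p := δ) (q := δ - a) (e := a - δ) (p' := a) (q' := 0)
    hT (by positivity) (by ring) (by ring) (Real.rpow_le_one (by positivity) hTτ (by linarith))

lemma weight_neg_le_of_one_le_mul {T δ a τ : ℝ} (hT : 0 < T) (hδ : 0 ≤ δ)
    (hTτ : 1 ≤ T * (1 + |τ|)) :
    weight (-a) τ ≤ ENNReal.ofReal (T ^ δ) * weight (δ - a) τ := by
  rw [ofReal_rpow_mul_weight hT.le, weight]
  gcongr
  simpa using rpow_mul_rpow_le_of_le_one (p := δ) (q := δ - a) (e := -δ) (p' := 0) (q' := -a)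
    hT (by positivity) (by ring) (by ring) (Real.rpow_le_one_of_one_le_of_nonpos hTτ (by linarith))

lemma ofReal_div_mul_rpow_le_of_one_le_mul {T δ a τ : ℝ} (hT : 0 < T) (hδa : a - δ ≤ 1)
    (hTτ : 1 ≤ T * (1 + |τ|)) :
    ENNReal.ofReal (2 / (1 + T * (1 + |τ|))) * ENNReal.ofReal (T ^ a) ≤
      2 * (ENNReal.ofReal (T ^ δ) * weight (δ - a) τ) := by
  have hreal : 2 / (1 + T * (1 + |τ|)) * T ^ a ≤ 2 * (T ^ δ * (1 + |τ|) ^ (δ - a)) :=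
    calc 2 / (1 + T * (1 + |τ|)) * T ^ a = 2 * T ^ a / (1 + T * (1 + |τ|)) := by ring
      _ ≤ 2 * T ^ a / (T * (1 + |τ|)) :=
        div_le_div_of_nonneg_left (by positivity) (by positivity) (by linarith)
      _ = 2 * (T ^ (a - 1) * (1 + |τ|) ^ (-1 : ℝ)) := by
        rw [Real.rpow_sub hT, Real.rpow_one, Real.rpow_neg_one]
        field_simp
      _ ≤ 2 * (T ^ δ * (1 + |τ|) ^ (δ - a)) := mul_le_mul_of_nonneg_left
        (rpow_mul_rpow_le_of_le_one (e := a - δ - 1) hT (by positivity) (by ring) (by ring)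
          (Real.rpow_le_one_of_one_le_of_nonpos hTτ (by linarith))) zero_le_two
  rw [ofReal_rpow_mul_weight hT.le, ← ENNReal.ofReal_mul (by positivity), ← ENNReal.ofReal_ofNat 2,
    ← ENNReal.ofReal_mul zero_le_two]
  exact ENNReal.ofReal_le_ofReal hreal

lemma exists_lintegral_bump_mul_weight_le {a δ : ℝ} (hδ : 0 ≤ δ) (hδa : δ ≤ a) (ha : a < 1) :
    ∃ C : ℝ≥0∞, C ≠ ∞ ∧ ∀ T, 0 < T → ∀ τ,
      ∫⁻ σ, bump 3 T (τ - σ) * weight (-a) σ ≤ C * (ENNReal.ofReal (T ^ δ) * weight (δ - a) τ) := by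
  have ha0 : 0 ≤ a := hδ.trans hδa
  obtain ⟨C₂, hC₂, h₂⟩ := exists_lintegral_bump_mul_weight_le_rpow (n := 2) one_lt_two ha0 ha
  obtain ⟨C₃, hC₃, h₃⟩ := exists_lintegral_bump_mul_weight_le_rpow (n := 3) (by norm_num) ha0 ha
  set M := ∫⁻ u, bump 3 1 u
  have hM : M ≠ ∞ := (lintegral_bump_one_lt_top (by norm_num)).ne
  refine ⟨C₃ + (ENNReal.ofReal (2 ^ a) * M + 2 * C₂), by finiteness, fun T hT τ => ?_⟩
  rcases le_total (T * (1 + |τ|)) 1 with hTτ | hTτ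
  · calc _ ≤ C₃ * ENNReal.ofReal (T ^ a) := h₃ T hT τ
      _ ≤ C₃ * (ENNReal.ofReal (T ^ δ) * weight (δ - a) τ) := by
          grw [ofReal_rpow_le_of_mul_le_one hT hδa hTτ]
      _ ≤ _ := by gcongr; exact le_self_add
  calc ∫⁻ σ, bump 3 T (τ - σ) * weight (-a) σ
      ≤ ∫⁻ σ, (ENNReal.ofReal (2 ^ a) * weight (-a) τ * bump 3 T (τ - σ) +
          ENNReal.ofReal (2 / (1 + T * (1 + |τ|))) * (bump 2 T (τ - σ) * weight (-a) σ)) :=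
        lintegral_mono fun σ => bump_three_mul_weight_le ha0 hT τ σ
    _ = ENNReal.ofReal (2 ^ a) * weight (-a) τ * M + ENNReal.ofReal (2 / (1 + T * (1 + |τ|))) *
          ∫⁻ σ, bump 2 T (τ - σ) * weight (-a) σ := by
        rw [lintegral_add_left (by fun_prop), lintegral_const_mul _ (by fun_prop),
          lintegral_const_mul _ (by fun_prop), lintegral_bump_sub 3 hT]
    _ ≤ ENNReal.ofReal (2 ^ a) * M * (ENNReal.ofReal (T ^ δ) * weight (δ - a) τ) +
          2 * C₂ * (ENNReal.ofReal (T ^ δ) * weight (δ - a) τ) := by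
        grw [h₂ T hT τ, mul_left_comm _ C₂,
          ofReal_div_mul_rpow_le_of_one_le_mul (δ := δ) hT (by linarith) hTτ,
          weight_neg_le_of_one_le_mul hT hδ hTτ]
        apply le_of_eq
        ring
    _ ≤ _ := by rw [← add_mul]; exact mul_le_mul_left le_add_self _

lemma lintegral_weight_mul_bump_mul_weight_le {T δ a r s t u : ℝ} {C : ℝ≥0∞}
    (h : ∀ τ, ∫⁻ σ, bump 3 T (τ - σ) * weight (-a) σ ≤
      C * (ENNReal.ofReal (T ^ δ) * weight (δ - a) τ))
    (hst : s + t = -a) (hu : r + (δ - a) = u) (τ : ℝ) :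
    ∫⁻ σ, weight r τ * bump 3 T (τ - σ) * weight s σ * weight t σ ≤
      C * ENNReal.ofReal (T ^ δ) * weight u τ := by
  have hmerge : ∀ σ, weight r τ * bump 3 T (τ - σ) * weight s σ * weight t σ
      = weight r τ * (bump 3 T (τ - σ) * weight (-a) σ) := fun σ => by
    rw [mul_assoc, weight_mul, hst, mul_assoc]
  simp_rw [hmerge]
  rw [lintegral_const_mul' _ _ (weight_ne_top r τ)]
  calc weight r τ * ∫⁻ σ, bump 3 T (τ - σ) * weight (-a) σ
      ≤ weight r τ * (C * (ENNReal.ofReal (T ^ δ) * weight (δ - a) τ)) := by grw [h τ]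
    _ = C * ENNReal.ofReal (T ^ δ) * (weight r τ * weight (δ - a) τ) := by ring
    _ = C * ENNReal.ofReal (T ^ δ) * weight u τ := by rw [weight_mul, hu]

lemma exists_lintegral_weight_mul_lintegral_bump_sq_le {b b' : ℝ} (hb' : -(1 / 2) < b')
    (hbb' : b' ≤ b) (hb : b < 1 / 2) :
    ∃ C : ℝ≥0∞, C ≠ ∞ ∧ ∀ T, 0 < T → ∀ G : ℝ → ℝ≥0∞, AEMeasurable G →
      ∫⁻ τ, (weight b' τ * ∫⁻ σ, bump 3 T (τ - σ) * G σ) ^ 2 ≤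
        (C * ENNReal.ofReal (T ^ (b - b'))) ^ 2 * ∫⁻ σ, (weight b σ * G σ) ^ 2 := by
  -- This `θ` puts both exponents `b - θ` and `-b' - θ` of the Schur test into `[b - b', 1)`.
  set θ := min b' (-b)
  have hθ : θ = b' ∨ θ = -b := by rcases min_choice b' (-b) with h | h <;> simp [θ, h]
  obtain ⟨C₁, hC₁, h₁⟩ := exists_lintegral_bump_mul_weight_le (a := b - θ) (δ := b - b')
    (by linarith) (by linarith [min_le_left b' (-b)]) (by rcases hθ with h | h <;> linarith)
  obtain ⟨C₂, hC₂, h₂⟩ := exists_lintegral_bump_mul_weight_le (a := -b' - θ) (δ := b - b')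
    (by linarith) (by linarith [min_le_right b' (-b)]) (by rcases hθ with h | h <;> linarith)
  refine ⟨C₁ + C₂, by finiteness, fun T hT G hG => ?_⟩
  set A := (C₁ + C₂) * ENNReal.ofReal (T ^ (b - b'))
  set k : ℝ → ℝ → ℝ≥0∞ := fun τ σ => weight b' τ * bump 3 T (τ - σ) * weight (-b) σ
  have hk : Measurable (Function.uncurry k) :=
    (((measurable_weight b').comp measurable_fst).mul
      ((measurable_bump 3 T).comp (measurable_fst.sub measurable_snd))).mul
      ((measurable_weight (-b)).comp measurable_snd)
  have hrow : ∀ τ, ∫⁻ σ, k τ σ * weight θ σ ≤ A * weight θ τ := fun τ =>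
    (lintegral_weight_mul_bump_mul_weight_le (h₁ T hT) (u := θ) (by ring) (by ring) τ).trans
      (mul_le_mul_left (mul_le_mul_left le_self_add _) _)
  have hcol : ∀ σ, ∫⁻ τ, k τ σ * weight θ τ ≤ A * weight θ σ := by
    intro σ
    have hswap : ∀ τ, k τ σ * weight θ τ
        = weight (-b) σ * bump 3 T (σ - τ) * weight b' τ * weight θ τ := fun τ => by
      simp only [k, bump_comm 3 T τ σ]; ring
    simp_rw [hswap]
    exact (lintegral_weight_mul_bump_mul_weight_le (h₂ T hT) (u := θ) (by ring) (by ring) σ).trans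
      (mul_le_mul_left (mul_le_mul_left le_add_self _) _)
  have hconv : ∀ τ, weight b' τ * ∫⁻ σ, bump 3 T (τ - σ) * G σ
      = ∫⁻ σ, k τ σ * (weight b σ * G σ) := fun τ => by
    rw [← lintegral_const_mul' _ _ (weight_ne_top b' τ)]
    congr 1 with σ
    have hcancel : weight (-b) σ * weight b σ = 1 := by rw [weight_mul, neg_add_cancel, weight_zero]
    rw [show k τ σ * (weight b σ * G σ)
        = weight b' τ * bump 3 T (τ - σ) * (weight (-b) σ * weight b σ) * G σ by
          simp only [k]; ring, hcancel]
    ring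
  simp_rw [hconv, sq A]
  exact lintegral_sq_lintegral_mul_le_of_schur hk (measurable_weight θ) (measurable_weight θ)
    (weight_ne_zero θ) (weight_ne_top θ) hrow hcol ((measurable_weight b).aemeasurable.mul hG)

lemma integral_mul_exp_eq_fourier (η : 𝓢(ℝ, ℂ)) (x : ℝ) :
    ∫ t : ℝ, η t * Complex.exp (-(Complex.I * t * x)) = 𝓕 (η : ℝ → ℂ) ((2 * Real.pi)⁻¹ * x) := by
  rw [Real.fourier_real_eq_integral_exp_smul]
  congr 1 with t
  rw [smul_eq_mul, mul_comm]
  congr 2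
  push_cast
  field_simp

lemma exists_norm_integral_mul_exp_le (η : 𝓢(ℝ, ℂ)) :
    ∃ C, ∀ x : ℝ, ‖∫ t : ℝ, η t * Complex.exp (-(Complex.I * t * x))‖ ≤ C / (1 + |x|) ^ 3 := by
  let L : ℝ ≃L[ℝ] ℝ := ContinuousLinearEquiv.smulLeft (Units.mk0 (2 * Real.pi)⁻¹ (by positivity))
  let φ : 𝓢(ℝ, ℂ) := SchwartzMap.compCLMOfContinuousLinearEquiv ℂ L (𝓕 η)
  refine ⟨2 ^ 3 * (Finset.Iic (3, 0)).sup (fun m => SchwartzMap.seminorm ℂ m.1 m.2) φ, fun x => ?_⟩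
  have h := SchwartzMap.one_add_le_sup_seminorm_apply (𝕜 := ℂ) (m := (3, 0)) le_rfl le_rfl φ x
  rw [norm_iteratedFDeriv_zero, Real.norm_eq_abs] at h
  have hφ : φ x = 𝓕 (η : ℝ → ℂ) ((2 * Real.pi)⁻¹ * x) := rfl
  rw [le_div_iff₀ (by positivity), mul_comm, integral_mul_exp_eq_fourier, ← hφ]
  exact h

lemma enorm_integral_le_lintegral_bump {F : ℝ → ℂ} {C : ℝ}
    (hF : ∀ x, ‖F x‖ ≤ C / (1 + |x|) ^ 3) {T : ℝ} (hT : 0 < T) (g : ℝ → ℂ) (τ : ℝ) :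
    ‖∫ σ, (T : ℂ) * F (T * (τ - σ)) * g σ‖ₑ ≤
      ENNReal.ofReal C * ∫⁻ σ, bump 3 T (τ - σ) * ‖g σ‖ₑ := by
  refine (enorm_integral_le_lintegral_enorm _).trans ?_
  rw [← lintegral_const_mul' _ _ ENNReal.ofReal_ne_top]
  refine lintegral_mono fun σ => ?_
  rw [enorm_mul, ← mul_assoc]
  gcongr
  rw [bump, ← ENNReal.ofReal_mul' (by positivity), ← ofReal_norm, norm_mul,
    Complex.norm_real, Real.norm_of_nonneg hT.le]
  refine ENNReal.ofReal_le_ofReal ?_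
  calc T * ‖F (T * (τ - σ))‖ ≤ T * (C / (1 + |T * (τ - σ)|) ^ 3) := by gcongr; exact hF _
    _ = C * (T / (1 + T * |τ - σ|) ^ 3) := by rw [abs_mul, abs_of_pos hT]; ring

lemma ofReal_rpow_two_mul_mul_sq {E : Type*} [SeminormedAddCommGroup E] (r x : ℝ) (z : E) :
    ENNReal.ofReal ((1 + |x|) ^ (2 * r) * ‖z‖ ^ 2) = (weight r x * ‖z‖ₑ) ^ 2 := by
  rw [mul_pow, weight, ← ofReal_norm, ← ENNReal.ofReal_pow (by positivity),
    ← ENNReal.ofReal_pow (norm_nonneg _), ← ENNReal.ofReal_mul (by positivity), mul_comm 2 r,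
    Real.rpow_mul (by positivity), Real.rpow_two]

lemma rpow_half_le_mul_of_le_sq_mul {X Y Z : ℝ≥0∞} (h : X ≤ Y ^ 2 * Z) :
    X ^ (1 / 2 : ℝ) ≤ Y * Z ^ (1 / 2 : ℝ) :=
  calc X ^ (1 / 2 : ℝ) ≤ (Y ^ 2 * Z) ^ (1 / 2 : ℝ) := ENNReal.rpow_le_rpow h (by norm_num)
    _ = Y * Z ^ (1 / 2 : ℝ) := by
        rw [ENNReal.mul_rpow_of_nonneg _ _ (by norm_num), ← ENNReal.rpow_natCast,
          ← ENNReal.rpow_mul]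
        norm_num

end TimeLocalization

open TimeLocalization in
/-- Frequency-side, per-mode form of Proposition 2.2 (time localization
`‖η(t/T) u‖_{X^{s,b'}} ≲ T^{b-b'} ‖u‖_{X^{s,b}}`): multiplication by `η(t/T)` acts on
the time-Fourier side as convolution with `T η̂(T·)`, and
`(∫ (1+|τ|)^{2b'} |∫ T η̂(T(τ-σ)) g(σ) dσ|² dτ)^{1/2}
  ≤ C T^{b-b'} (∫ (1+|τ|)^{2b} |g(τ)|² dτ)^{1/2}`
for `-1/2 < b' ≤ b < 1/2` and `T ∈ (0,1)`, where `η̂(τ) = ∫ η(t) e^{-itτ} dt`. -/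
theorem stmt17 (η : SchwartzMap ℝ ℂ) (b b' : ℝ)
    (hb' : -(1/2) < b') (hbb' : b' ≤ b) (hb : b < 1/2) :
    ∃ C : ℝ, 0 < C ∧ ∀ T : ℝ, T ∈ Set.Ioo (0:ℝ) 1 → ∀ g : ℝ → ℂ,
      AEStronglyMeasurable g volume →
      Integrable (fun τ : ℝ => (1 + |τ|) ^ (2 * b) * ‖g τ‖ ^ 2) →
      (∫⁻ τ : ℝ, ENNReal.ofReal ((1 + |τ|) ^ (2 * b') *
          ‖∫ σ : ℝ, (T : ℂ) *
              (∫ t : ℝ, η t * Complex.exp (-(Complex.I * (t : ℂ) * ((T * (τ - σ) : ℝ) : ℂ)))) *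
              g σ‖ ^ 2)) ^ ((1:ℝ)/2)
      ≤ ENNReal.ofReal (C * T ^ (b - b')) *
        (∫⁻ τ : ℝ, ENNReal.ofReal ((1 + |τ|) ^ (2 * b) * ‖g τ‖ ^ 2)) ^ ((1:ℝ)/2) := by
  obtain ⟨C₀, hdecay⟩ := exists_norm_integral_mul_exp_le η
  obtain ⟨C₁, hC₁, hL2⟩ := exists_lintegral_weight_mul_lintegral_bump_sq_le hb' hbb' hb
  obtain ⟨C, -, hC, -⟩ :=
    ENNReal.lt_iff_exists_real_btwn.1 (by finiteness : ENNReal.ofReal C₀ * C₁ < ∞)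
  have hCpos : 0 < C := ENNReal.ofReal_pos.1 (zero_le.trans_lt hC)
  refine ⟨C, hCpos, ?_⟩
  rintro T ⟨hT, -⟩ g hg -
  apply rpow_half_le_mul_of_le_sq_mul
  simp_rw [ofReal_rpow_two_mul_mul_sq]
  calc _ ≤ ∫⁻ τ, (ENNReal.ofReal C₀ * (weight b' τ * ∫⁻ σ, bump 3 T (τ - σ) * ‖g σ‖ₑ)) ^ 2 :=
        lintegral_mono fun τ => by
          grw [enorm_integral_le_lintegral_bump hdecay hT g τ, mul_left_comm]
    _ ≤ ENNReal.ofReal C₀ ^ 2 * ((C₁ * ENNReal.ofReal (T ^ (b - b'))) ^ 2 *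
          ∫⁻ σ, (weight b σ * ‖g σ‖ₑ) ^ 2) := by
        simp_rw [mul_pow _ (weight b' _ * _)]
        rw [lintegral_const_mul' _ _ (by finiteness)]
        grw [hL2 T hT _ hg.enorm]
    _ ≤ _ := by
        rw [← mul_assoc, ← mul_pow, ← mul_assoc, ENNReal.ofReal_mul hCpos.le]
        gcongr
end
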